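/- arXiv:1307.4272 — 12 statements merged into one kernel-verified Lean document; each statement's English description precedes it below -/
import Mathlib

section
/- Let A be a nonsingular n×n matrix over a field, with rows and columns indexed by a finite set V. Then for all subsets X, Y of V, the nullity of the submatrix A⁻¹[X,Y] (rows indexed by X, columns by Y) equals the nullity of the submatrix A[V∖Y, V∖X]. -/
open Matrix
open scoped symmDiff

variable {V F : Type*} [Fintype V] [DecidableEq V] [Field F]

/-- Nullity of a matrix: dimension of the kernel of the associated linear map. -/
noncomputable def nullity {F : Type*} [Field F] {m n : Type*} [Fintype m] [Fintype n]
    (M : Matrix m n F) : ℕ :=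
  Module.finrank F (LinearMap.ker M.mulVecLin)

/-- Submatrix A[X,Y]: rows indexed by X, columns by Y. -/
def subm (A : Matrix V V F) (X Y : Finset V) : Matrix X Y F :=
  A.submatrix Subtype.val Subtype.val

/-- Principal pivot transform of A on Z, defined blockwise. -/
noncomputable def ppt (A : Matrix V V F) (Z : Finset V) : Matrix V V F :=
  fun i j =>
    if hi : i ∈ Z then
      if hj : j ∈ Z then (subm A Z Z)⁻¹ ⟨i, hi⟩ ⟨j, hj⟩
      else - ∑ k : Z, (subm A Z Z)⁻¹ ⟨i, hi⟩ k * A k j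
    else
      if hj : j ∈ Z then ∑ k : Z, A i k * (subm A Z Z)⁻¹ k ⟨j, hj⟩
      else A i j - ∑ k : Z, ∑ l : Z, A i k * (subm A Z Z)⁻¹ k l * A l j

/-- Extension by zero from a subset. -/
def extL (S : Finset V) : (S → F) →ₗ[F] (V → F) where
  toFun v j := if h : j ∈ S then v ⟨j, h⟩ else 0
  map_add' u v := by funext j; by_cases h : j ∈ S <;> simp [h]
  map_smul' c v := by funext j; by_cases h : j ∈ S <;> simp [h]

omit [Fintype V] in
lemma extL_pos (S : Finset V) (v : S → F) {j : V} (h : j ∈ S) : extL S v j = v ⟨j, h⟩ :=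
  dif_pos h

omit [Fintype V] in
lemma extL_neg (S : Finset V) (v : S → F) {j : V} (h : j ∉ S) : extL S v j = 0 :=
  dif_neg h

lemma mulVec_extL (M : Matrix V V F) (S : Finset V) (v : S → F) (i : V) :
    M.mulVec (extL S v) i = ∑ j : S, M i j * v j := by
  rw [Matrix.mulVec, dotProduct,
    ← Finset.sum_subset (Finset.subset_univ S) (fun j _ hj => by rw [extL_neg _ _ hj, mul_zero]),
    ← Finset.sum_attach S (fun j => M i j * extL S v j)]
  exact Finset.sum_congr rfl fun j _ => by rw [extL_pos _ _ j.2]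

/-- Gustafson's nullity theorem: n(A⁻¹[X,Y]) = n(A[V∖Y, V∖X]). -/
theorem nullity_theorem (A : Matrix V V F) (hA : IsUnit A.det) (X Y : Finset V) :
    nullity (subm A⁻¹ X Y) = nullity (subm A Yᶜ Xᶜ) := by
  classical
  set B := A⁻¹ with hB
  have hker1 : ∀ v : Y → F, v ∈ LinearMap.ker (subm B X Y).mulVecLin ↔
      ∀ i : V, i ∈ X → B.mulVec (extL Y v) i = 0 := by
    intro v
    simp only [LinearMap.mem_ker, Matrix.mulVecLin_apply, funext_iff]
    constructor
    · intro h i hi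
      rw [mulVec_extL]
      simpa [Matrix.mulVec, dotProduct, subm] using h ⟨i, hi⟩
    · intro h i
      have := h i.1 i.2
      rw [mulVec_extL] at this
      simpa [Matrix.mulVec, dotProduct, subm] using this
  have hker2 : ∀ u : (Xᶜ : Finset V) → F, u ∈ LinearMap.ker (subm A Yᶜ Xᶜ).mulVecLin ↔
      ∀ i : V, i ∉ Y → A.mulVec (extL Xᶜ u) i = 0 := by
    intro u
    simp only [LinearMap.mem_ker, Matrix.mulVecLin_apply, funext_iff]
    constructor
    · intro h i hi
      rw [mulVec_extL]
      simpa [Matrix.mulVec, dotProduct, subm] using h ⟨i, Finset.mem_compl.mpr hi⟩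
    · intro h i
      have := h i.1 (Finset.mem_compl.mp i.2)
      rw [mulVec_extL] at this
      simpa [Matrix.mulVec, dotProduct, subm] using this
  have hAB : ∀ x : V → F, A.mulVec (B.mulVec x) = x := by
    intro x
    rw [Matrix.mulVec_mulVec, hB, Matrix.mul_nonsing_inv _ hA, Matrix.one_mulVec]
  have hBA : ∀ x : V → F, B.mulVec (A.mulVec x) = x := by
    intro x
    rw [Matrix.mulVec_mulVec, hB, Matrix.nonsing_inv_mul _ hA, Matrix.one_mulVec]
  let Φ : (Y → F) →ₗ[F] ((Xᶜ : Finset V) → F) :=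
    (LinearMap.funLeft F F Subtype.val) ∘ₗ B.mulVecLin ∘ₗ extL Y
  let Ψ : ((Xᶜ : Finset V) → F) →ₗ[F] (Y → F) :=
    (LinearMap.funLeft F F Subtype.val) ∘ₗ A.mulVecLin ∘ₗ extL Xᶜ
  have factA : ∀ v ∈ LinearMap.ker (subm B X Y).mulVecLin,
      extL Xᶜ (Φ v) = B.mulVec (extL Y v) := by
    intro v hv
    funext i
    by_cases h : i ∈ (Xᶜ : Finset V)
    · rw [extL_pos _ _ h]; rfl
    · rw [extL_neg _ _ h]
      exact ((hker1 v).mp hv i (by simpa using h)).symm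
  have factB : ∀ u ∈ LinearMap.ker (subm A Yᶜ Xᶜ).mulVecLin,
      extL Y (Ψ u) = A.mulVec (extL Xᶜ u) := by
    intro u hu
    funext i
    by_cases h : i ∈ Y
    · rw [extL_pos _ _ h]; rfl
    · rw [extL_neg _ _ h]
      exact ((hker2 u).mp hu i h).symm
  have h1 : ∀ v ∈ LinearMap.ker (subm B X Y).mulVecLin,
      Φ v ∈ LinearMap.ker (subm A Yᶜ Xᶜ).mulVecLin := by
    intro v hv
    rw [hker2]
    intro i hi
    rw [factA v hv, hAB]
    exact extL_neg _ _ hi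
  have h2 : ∀ u ∈ LinearMap.ker (subm A Yᶜ Xᶜ).mulVecLin,
      Ψ u ∈ LinearMap.ker (subm B X Y).mulVecLin := by
    intro u hu
    rw [hker1]
    intro i hi
    rw [factB u hu, hBA]
    exact extL_neg _ _ (fun h' => Finset.mem_compl.mp h' hi)
  have e : (LinearMap.ker (subm B X Y).mulVecLin) ≃ₗ[F]
      (LinearMap.ker (subm A Yᶜ Xᶜ).mulVecLin) := by
    refine LinearEquiv.ofLinear (Φ.restrict h1) (Ψ.restrict h2) ?_ ?_
    · ext u j
      show Φ (Ψ u.1) j = u.1 j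
      show B.mulVec (extL Y (Ψ u.1)) j.1 = u.1 j
      rw [factB u.1 u.2, hBA, extL_pos _ _ j.2]
    · ext v j
      show Ψ (Φ v.1) j = v.1 j
      show A.mulVec (extL Xᶜ (Φ v.1)) j.1 = v.1 j
      rw [factA v.1 v.2, hAB, extL_pos _ _ j.2]
  exact e.finrank_eq
end

section
/- Let A be a V×V-matrix over a field and Z ⊆ V be such that the principal submatrix A[Z,Z] is nonsingular. Let A*Z denote the principal pivot transform of A on Z. Then for all X, Y ⊆ V, setting R = Z ∖ (X △ Y) (where △ is symmetric difference), the nullity of (A*Z)[X,Y] equals the nullity of A[X △ R, Y △ R]. -/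
open Matrix
open scoped symmDiff

set_option linter.unusedSectionVars false

variable {V F : Type*} [Fintype V] [DecidableEq V] [Field F]

/-! ### Auxiliary definitions -/

/-- Extension of a vector on `Y` by zero to all of `V`. -/
def extZero (Y : Finset V) (u : Y → F) : V → F := fun j => if h : j ∈ Y then u ⟨j, h⟩ else 0

@[simp] lemma extZero_coe (Y : Finset V) (u : Y → F) (j : Y) : extZero Y u ↑j = u j := by
  simp [extZero]

lemma extZero_not_mem (Y : Finset V) (u : Y → F) {j : V} (h : j ∉ Y) : extZero Y u j = 0 := by
  simp [extZero, h]

lemma subm_mulVec (M : Matrix V V F) (X Y : Finset V) (u : Y → F) {i : V} (hi : i ∈ X) :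
    (subm M X Y).mulVec u ⟨i, hi⟩ = M.mulVec (extZero Y u) i := by
  have h : ∑ j : V, M i j * extZero Y u j = ∑ j ∈ Y, M i j * extZero Y u j :=
    (Finset.sum_subset (Finset.subset_univ Y)
      (fun j _ hj => by rw [extZero_not_mem Y u hj, mul_zero])).symm
  simp only [mulVec, dotProduct, subm, submatrix_apply]
  rw [h, ← Finset.sum_coe_sort Y (fun j => M i j * extZero Y u j)]
  simp only [extZero_coe]

lemma sum_elim_eq_iff {m n γ : Type*} {f f' : m → γ} {g g' : n → γ} :
    Sum.elim f g = Sum.elim f' g' ↔ f = f' ∧ g = g' := by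
  constructor
  · intro h
    exact ⟨funext fun i => congrFun h (Sum.inl i), funext fun i => congrFun h (Sum.inr i)⟩
  · rintro ⟨rfl, rfl⟩; rfl

lemma block_graph {m n : Type*} [Fintype m] [Fintype n] [DecidableEq m]
    (B : Matrix m m F) (C : Matrix m n F) (D : Matrix n m F) (E : Matrix n n F)
    (hB : IsUnit B.det) (x1 y1 : m → F) (x2 y2 : n → F) :
    (fromBlocks B⁻¹ (-(B⁻¹*C)) (D*B⁻¹) (E - D*(B⁻¹*C))).mulVec (Sum.elim x1 x2) =
        Sum.elim y1 y2
    ↔ (fromBlocks B C D E).mulVec (Sum.elim y1 x2) = Sum.elim x1 y2 := by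
  rw [fromBlocks_mulVec, fromBlocks_mulVec]
  simp only [Sum.elim_comp_inl, Sum.elim_comp_inr, sum_elim_eq_iff]
  constructor
  · rintro ⟨h1, h2⟩
    constructor
    · rw [← h1, mulVec_add, mulVec_mulVec, neg_mulVec]
      simp only [mulVec_neg, mulVec_mulVec, ← Matrix.mul_assoc]
      rw [Matrix.mul_nonsing_inv B hB, Matrix.one_mul, one_mulVec]
      abel
    · rw [← h2, ← h1, mulVec_add, mulVec_mulVec, neg_mulVec]
      simp only [mulVec_neg, mulVec_mulVec, sub_mulVec, ← Matrix.mul_assoc]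
      abel
  · rintro ⟨h1, h2⟩
    have hy1 : y1 = B⁻¹.mulVec x1 + (-(B⁻¹*C)).mulVec x2 := by
      rw [← h1, mulVec_add, mulVec_mulVec, neg_mulVec, mulVec_mulVec,
        Matrix.nonsing_inv_mul B hB, one_mulVec]
      abel
    constructor
    · rw [hy1]
    · rw [← h2, hy1, mulVec_add, neg_mulVec]
      simp only [mulVec_neg, mulVec_mulVec, sub_mulVec, ← Matrix.mul_assoc]
      abel

section blocks

variable (A : Matrix V V F) (Z : Finset V)

/-- Off-diagonal and complement blocks of `A` relative to `Z`. -/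
def CmB : Matrix {a // a ∈ Z} {a // ¬ a ∈ Z} F := A.submatrix Subtype.val Subtype.val
def DmB : Matrix {a // ¬ a ∈ Z} {a // a ∈ Z} F := A.submatrix Subtype.val Subtype.val
def EmB : Matrix {a // ¬ a ∈ Z} {a // ¬ a ∈ Z} F := A.submatrix Subtype.val Subtype.val

lemma A_block :
    A.submatrix (Equiv.sumCompl (fun a => a ∈ Z)) (Equiv.sumCompl (fun a => a ∈ Z)) =
      fromBlocks (subm A Z Z) (CmB A Z) (DmB A Z) (EmB A Z) := by
  ext (i | i) (j | j) <;> rfl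

lemma ppt_block :
    (ppt A Z).submatrix (Equiv.sumCompl (fun a => a ∈ Z)) (Equiv.sumCompl (fun a => a ∈ Z)) =
      fromBlocks (subm A Z Z)⁻¹ (-((subm A Z Z)⁻¹ * CmB A Z)) (DmB A Z * (subm A Z Z)⁻¹)
        (EmB A Z - DmB A Z * ((subm A Z Z)⁻¹ * CmB A Z)) := by
  ext (i | i) (j | j)
  · simp [ppt, fromBlocks, i.prop, j.prop]
  · simp [ppt, fromBlocks, CmB, mul_apply, i.prop, j.prop]
  · simp [ppt, fromBlocks, DmB, mul_apply, i.prop, j.prop]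
  · simp [ppt, fromBlocks, CmB, DmB, EmB, mul_apply, i.prop, j.prop, Finset.mul_sum, mul_assoc]

lemma graph_iff (hZ : IsUnit (subm A Z Z).det) (x y : V → F) :
    (ppt A Z).mulVec x = y ↔
      A.mulVec (fun i => if i ∈ Z then y i else x i) = fun i => if i ∈ Z then x i else y i := by
  set e := Equiv.sumCompl (fun a => a ∈ Z) with he
  have key : ∀ (M : Matrix V V F) (v w : V → F),
      M.mulVec v = w ↔ (M.submatrix e e).mulVec (v ∘ e) = w ∘ e := by
    intro M v w
    have hve : (v ∘ (e : _ → V)) ∘ (e.symm : V → _) = v := by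
      funext a; simp
    rw [submatrix_mulVec_equiv, hve]
    constructor
    · intro h; rw [h]
    · intro h
      funext a
      have := congrFun h (e.symm a)
      simpa using this
  rw [key, key, ppt_block A Z, A_block A Z]
  have h1 : x ∘ e = Sum.elim (fun i : {a // a ∈ Z} => x ↑i) (fun i : {a // ¬ a ∈ Z} => x ↑i) := by
    funext p; obtain (i | i) := p <;> simp [he]
  have h2 : y ∘ e = Sum.elim (fun i : {a // a ∈ Z} => y ↑i) (fun i : {a // ¬ a ∈ Z} => y ↑i) := by
    funext p; obtain (i | i) := p <;> simp [he]
  have h3 : (fun i => if i ∈ Z then y i else x i) ∘ e =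
      Sum.elim (fun i : {a // a ∈ Z} => y ↑i) (fun i : {a // ¬ a ∈ Z} => x ↑i) := by
    funext p; obtain (i | i) := p <;> simp [he, i.prop]
  have h4 : (fun i => if i ∈ Z then x i else y i) ∘ e =
      Sum.elim (fun i : {a // a ∈ Z} => x ↑i) (fun i : {a // ¬ a ∈ Z} => y ↑i) := by
    funext p; obtain (i | i) := p <;> simp [he, i.prop]
  rw [h1, h2, h3, h4]
  exact block_graph _ _ _ _ hZ _ _ _ _

end blocks

/-- Transfer lemma: an injective linear map on ambient vectors compatible with
support/kernel conditions gives an inequality of nullities of submatrices. -/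
lemma nullity_le_aux (M N : Matrix V V F) (X Y X' Y' : Finset V)
    (Φ : (V → F) →ₗ[F] (V → F)) (hΦ : Function.Injective Φ)
    (hsupp : ∀ x : V → F, (∀ j, j ∉ Y → x j = 0) → (∀ i ∈ X, M.mulVec x i = 0) →
        (∀ j, j ∉ Y' → Φ x j = 0) ∧ (∀ i ∈ X', N.mulVec (Φ x) i = 0)) :
    nullity (subm M X Y) ≤ nullity (subm N X' Y') := by
  classical
  let E1 : (Y → F) →ₗ[F] (V → F) :=
    { toFun := extZero Y
      map_add' := by
        intro a b; funext j; by_cases h : j ∈ Y <;> simp [extZero, h]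
      map_smul' := by
        intro c a; funext j; by_cases h : j ∈ Y <;> simp [extZero, h] }
  let G : (Y → F) →ₗ[F] (↥Y' → F) :=
    (LinearMap.funLeft F F Subtype.val) ∘ₗ Φ ∘ₗ E1
  have hGapp : ∀ (u : Y → F) (j : Y'), G u j = Φ (extZero Y u) ↑j := fun u j => rfl
  have hcond : ∀ u ∈ LinearMap.ker (subm M X Y).mulVecLin,
      (∀ j, j ∉ Y' → Φ (extZero Y u) j = 0) ∧ (∀ i ∈ X', N.mulVec (Φ (extZero Y u)) i = 0) := by
    intro u hu
    refine hsupp _ (fun j hj => extZero_not_mem Y u hj) ?_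
    intro i hi
    have h0 : (subm M X Y).mulVec u = 0 := hu
    have := congrFun h0 ⟨i, hi⟩
    rwa [subm_mulVec M X Y u hi] at this
  have hmaps : ∀ u ∈ LinearMap.ker (subm M X Y).mulVecLin,
      G u ∈ LinearMap.ker (subm N X' Y').mulVecLin := by
    intro u hu
    obtain ⟨hs, hk⟩ := hcond u hu
    have hext : extZero Y' (G u) = Φ (extZero Y u) := by
      funext j
      by_cases h : j ∈ Y'
      · rw [show j = ((⟨j, h⟩ : Y') : V) from rfl, extZero_coe, hGapp]
      · rw [extZero_not_mem _ _ h, hs j h]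
    rw [LinearMap.mem_ker]
    funext i
    obtain ⟨i, hi⟩ := i
    rw [mulVecLin_apply, Pi.zero_apply, subm_mulVec N X' Y' _ hi, hext]
    exact hk i hi
  let G' := G.restrict hmaps
  have hinj : Function.Injective G' := by
    intro a b hab
    have hab' : G ↑a = G ↑b := congrArg Subtype.val hab
    obtain ⟨hsa, -⟩ := hcond ↑a a.2
    obtain ⟨hsb, -⟩ := hcond ↑b b.2
    have hΦeq : Φ (extZero Y ↑a) = Φ (extZero Y ↑b) := by
      funext j
      by_cases h : j ∈ Y'
      · have := congrFun hab' ⟨j, h⟩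
        rwa [hGapp, hGapp] at this
      · rw [hsa j h, hsb j h]
    have hE : extZero Y (↑a : Y → F) = extZero Y (↑b : Y → F) := hΦ hΦeq
    apply Subtype.ext
    funext j
    have := congrFun hE ↑j
    rwa [extZero_coe, extZero_coe] at this
  exact LinearMap.finrank_le_finrank_of_injective hinj

/-- Nullity theorem for principal pivot transform. -/
theorem nullity_theorem_ppt (A : Matrix V V F) (Z : Finset V)
    (hZ : IsUnit (subm A Z Z).det) (X Y : Finset V)
    (R : Finset V) (hR : R = Z \ (X ∆ Y)) :
    nullity (subm (ppt A Z) X Y) = nullity (subm A (X ∆ R) (Y ∆ R)) := by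
  classical
  have hX' : ∀ j, j ∈ X ∆ R ↔ ((j ∈ Z ∧ j ∉ Y) ∨ (j ∉ Z ∧ j ∈ X)) := by
    intro j
    subst hR
    simp only [Finset.mem_symmDiff, Finset.mem_sdiff]
    tauto
  have hY' : ∀ j, j ∈ Y ∆ R ↔ ((j ∈ Z ∧ j ∉ X) ∨ (j ∉ Z ∧ j ∈ Y)) := by
    intro j
    subst hR
    simp only [Finset.mem_symmDiff, Finset.mem_sdiff]
    tauto
  -- the two swap maps
  let Φ₁ : (V → F) →ₗ[F] (V → F) :=
    { toFun := fun x => fun i => if i ∈ Z then (ppt A Z).mulVec x i else x i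
      map_add' := by
        intro a b; funext i; by_cases h : i ∈ Z <;> simp [h, mulVec_add]
      map_smul' := by
        intro c a; funext i; by_cases h : i ∈ Z <;> simp [h, mulVec_smul] }
  let Φ₂ : (V → F) →ₗ[F] (V → F) :=
    { toFun := fun x => fun i => if i ∈ Z then A.mulVec x i else x i
      map_add' := by
        intro a b; funext i; by_cases h : i ∈ Z <;> simp [h, mulVec_add]
      map_smul' := by
        intro c a; funext i; by_cases h : i ∈ Z <;> simp [h, mulVec_smul] }
  -- the key graph facts
  have hfwd : ∀ x : V → F,
      A.mulVec (Φ₁ x) = fun i => if i ∈ Z then x i else (ppt A Z).mulVec x i := by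
    intro x
    exact (graph_iff A Z hZ x ((ppt A Z).mulVec x)).mp rfl
  have hbwd : ∀ x : V → F,
      (ppt A Z).mulVec (Φ₂ x) = fun i => if i ∈ Z then x i else A.mulVec x i := by
    intro x
    apply (graph_iff A Z hZ (Φ₂ x) _).mpr
    have e1 : (fun i => if i ∈ Z then (if i ∈ Z then x i else A.mulVec x i) else Φ₂ x i) = x := by
      funext i; by_cases h : i ∈ Z <;> simp [Φ₂, h]
    have e2 : (fun i => if i ∈ Z then Φ₂ x i else (if i ∈ Z then x i else A.mulVec x i)) =
        A.mulVec x := by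
      funext i; by_cases h : i ∈ Z <;> simp [Φ₂, h]
    rw [e1, e2]
  -- mutual inverse
  have h21 : ∀ x : V → F, Φ₂ (Φ₁ x) = x := by
    intro x
    funext i
    by_cases h : i ∈ Z
    · simp only [Φ₂, LinearMap.coe_mk, AddHom.coe_mk, h, if_pos, hfwd x]
    · simp [Φ₂, Φ₁, h]
  have h12 : ∀ x : V → F, Φ₁ (Φ₂ x) = x := by
    intro x
    funext i
    by_cases h : i ∈ Z
    · simp only [Φ₁, LinearMap.coe_mk, AddHom.coe_mk, h, if_pos, hbwd x]
    · simp [Φ₂, Φ₁, h]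
  have hinj₁ : Function.Injective Φ₁ := Function.LeftInverse.injective h21
  have hinj₂ : Function.Injective Φ₂ := Function.LeftInverse.injective h12
  refine le_antisymm ?_ ?_
  · apply nullity_le_aux (ppt A Z) A X Y (X ∆ R) (Y ∆ R) Φ₁ hinj₁
    intro x hY0 hX0
    constructor
    · intro j hj
      rw [hY' j] at hj
      push_neg at hj
      by_cases h : j ∈ Z
      · have hjX : j ∈ X := by tauto
        simpa [Φ₁, h] using hX0 j hjX
      · have hjY : j ∉ Y := by tauto
        simpa [Φ₁, h] using hY0 j hjY
    · intro i hi
      rw [hfwd x]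
      rw [hX' i] at hi
      rcases hi with ⟨h1, h2⟩ | ⟨h1, h2⟩
      · simp [h1, hY0 i h2]
      · simp [h1, hX0 i h2]
  · apply nullity_le_aux A (ppt A Z) (X ∆ R) (Y ∆ R) X Y Φ₂ hinj₂
    intro x hY0 hX0
    constructor
    · intro j hj
      by_cases h : j ∈ Z
      · have : j ∈ X ∆ R := (hX' j).mpr (Or.inl ⟨h, hj⟩)
        simpa [Φ₂, h] using hX0 j this
      · have : j ∉ Y ∆ R := by
          rw [hY' j]; push_neg; constructor <;> intro <;> tauto
        simpa [Φ₂, h] using hY0 j this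
    · intro i hi
      rw [hbwd x]
      by_cases h : i ∈ Z
      · have : i ∉ Y ∆ R := by
          rw [hY' i]; push_neg; constructor <;> intro <;> tauto
        simp [h, hY0 i this]
      · have : i ∈ X ∆ R := (hX' i).mpr (Or.inr ⟨h, hi⟩)
        simp [h, hX0 i this]
end

section
/- Let A be a V×V-matrix over a field and Z ⊆ V with A[Z,Z] nonsingular. Then for all X ⊆ V, the nullity of (A*Z)[X, V∖X] equals the nullity of A[X, V∖X]. Equivalently, the rank of (A*Z)[X, V∖X] equals the rank of A[X, V∖X]. -/
open Matrix
open scoped symmDiff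

variable {V F : Type*} [Fintype V] [DecidableEq V] [Field F]

/-- swap matrix: acts as A on rows in Z, identity elsewhere -/
def MT (A : Matrix V V F) (Z : Finset V) : Matrix V V F :=
  fun i j => if i ∈ Z then A i j else if i = j then 1 else 0

def MS (A : Matrix V V F) (Z : Finset V) : Matrix V V F :=
  fun i j => if i ∈ Z then (if i = j then 1 else 0) else A i j

lemma key (A : Matrix V V F) (Z : Finset V) (hZ : IsUnit (subm A Z Z).det) :
    ppt A Z * MT A Z = MS A Z := by
  have hinv : (subm A Z Z)⁻¹ * subm A Z Z = 1 := nonsing_inv_mul _ hZ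
  ext i j
  rw [mul_apply, ← Finset.sum_add_sum_compl Z]
  have h2 : ∑ k ∈ Zᶜ, ppt A Z i k * MT A Z k j
      = if j ∈ Z then 0 else ppt A Z i j := by
    have : ∀ k ∈ Zᶜ, ppt A Z i k * MT A Z k j
        = if k = j then (if j ∈ Z then 0 else ppt A Z i j) else 0 := by
      intro k hk
      rw [Finset.mem_compl] at hk
      simp only [MT, if_neg hk]
      rcases eq_or_ne k j with rfl | hkj
      · simp [if_neg hk]
      · simp [hkj]
    rw [Finset.sum_congr rfl this, Finset.sum_ite_eq' Zᶜ j]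
    by_cases hj : j ∈ Z <;> simp [hj]
  have h1 : ∑ k ∈ Z, ppt A Z i k * MT A Z k j
      = ∑ k ∈ Z.attach, ppt A Z i ↑k * A ↑k j := by
    rw [← Finset.sum_attach Z (fun k => ppt A Z i k * MT A Z k j)]
    exact Finset.sum_congr rfl fun k _ => by simp [MT, k.2]
  rw [h1, h2]
  by_cases hi : i ∈ Z <;> by_cases hj : j ∈ Z
  · -- i ∈ Z, j ∈ Z : ∑ P i k * A k j = δ i j
    have hc : ∀ k ∈ Z.attach, ppt A Z i ↑k * A ↑k j
        = (subm A Z Z)⁻¹ ⟨i, hi⟩ k * subm A Z Z k ⟨j, hj⟩ := by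
      intro k _
      rw [ppt, dif_pos hi, dif_pos k.2]; rfl
    rw [Finset.sum_congr rfl hc, ← Finset.univ_eq_attach, ← mul_apply, hinv]
    simp [MS, hi, hj, one_apply, Subtype.ext_iff]
  · -- i ∈ Z, j ∉ Z : ∑ P i k * A k j + ppt i j = 0
    have hc : ∀ k ∈ Z.attach, ppt A Z i ↑k * A ↑k j
        = (subm A Z Z)⁻¹ ⟨i, hi⟩ k * A ↑k j := by
      intro k _; rw [ppt, dif_pos hi, dif_pos k.2]
    rw [Finset.sum_congr rfl hc, ← Finset.univ_eq_attach]
    rw [if_neg hj, ppt, dif_pos hi, dif_neg hj]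
    rw [add_neg_cancel]
    simp only [MS, if_pos hi]
    rw [if_neg (fun h : i = j => hj (h ▸ hi))]
  · -- i ∉ Z, j ∈ Z : ∑_{k} (∑_l A i l P l k) * A k j = A i j
    have hc : ∀ k ∈ Z.attach, ppt A Z i ↑k * A ↑k j
        = ∑ l : Z, A i ↑l * ((subm A Z Z)⁻¹ l k * A ↑k j) := by
      intro k _
      rw [ppt, dif_neg hi, dif_pos k.2, Finset.sum_mul]
      exact Finset.sum_congr rfl fun l _ => by ring
    rw [Finset.sum_congr rfl hc, ← Finset.univ_eq_attach, Finset.sum_comm]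
    have : ∀ l : Z, ∑ k : Z, A i ↑l * ((subm A Z Z)⁻¹ l k * A ↑k j)
        = A i ↑l * ((1 : Matrix Z Z F) l ⟨j, hj⟩) := by
      intro l
      rw [← Finset.mul_sum, ← hinv, mul_apply]
      congr 1
    rw [Finset.sum_congr rfl fun l _ => this l]
    simp only [one_apply, mul_ite, mul_one, mul_zero]
    rw [Finset.sum_ite_eq' Finset.univ (⟨j, hj⟩ : Z) (fun l => A i ↑l)]
    simp [MS, hi, hj]
  · -- i ∉ Z, j ∉ Z
    have hc : ∀ k ∈ Z.attach, ppt A Z i ↑k * A ↑k j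
        = ∑ l : Z, A i ↑l * (subm A Z Z)⁻¹ l k * A ↑k j := by
      intro k _
      rw [ppt, dif_neg hi, dif_pos k.2, Finset.sum_mul]
    rw [Finset.sum_congr rfl hc, ← Finset.univ_eq_attach]
    rw [if_neg hj, ppt, dif_neg hi, dif_neg hj, Finset.sum_comm]
    simp only [MS, if_neg hi]
    ring

lemma MT_mulVec (A : Matrix V V F) (Z : Finset V) (u : V → F) (i : V) :
    (MT A Z).mulVec u i = if i ∈ Z then A.mulVec u i else u i := by
  by_cases hi : i ∈ Z <;>
    simp [MT, mulVec, dotProduct, hi, ite_mul, Finset.sum_ite_eq]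

lemma MS_mulVec (A : Matrix V V F) (Z : Finset V) (u : V → F) (i : V) :
    (MS A Z).mulVec u i = if i ∈ Z then u i else A.mulVec u i := by
  by_cases hi : i ∈ Z <;>
    simp [MS, mulVec, dotProduct, hi, ite_mul, Finset.sum_ite_eq]

lemma MT_inj (A : Matrix V V F) (Z : Finset V) (hZ : IsUnit (subm A Z Z).det) :
    Function.Injective (MT A Z).mulVecLin := by
  rw [← LinearMap.ker_eq_bot]
  apply LinearMap.ker_eq_bot'.mpr
  intro u hu
  rw [mulVecLin_apply] at hu
  have hout : ∀ i, i ∉ Z → u i = 0 := by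
    intro i hi
    have := congrFun hu i
    rwa [MT_mulVec, if_neg hi, Pi.zero_apply] at this
  set v : Z → F := fun k => u ↑k with hvdef
  have hv : (subm A Z Z).mulVec v = 0 := by
    funext k
    obtain ⟨i, hi⟩ := k
    have h := congrFun hu i
    rw [MT_mulVec, if_pos hi, Pi.zero_apply] at h
    rw [mulVec, dotProduct] at h
    rw [Pi.zero_apply, mulVec, dotProduct]
    rw [← h, ← Finset.sum_add_sum_compl Z (fun j => A i j * u j)]
    have hz : ∑ j ∈ Zᶜ, A i j * u j = 0 :=
      Finset.sum_eq_zero fun j hj => by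
        rw [hout j (Finset.mem_compl.mp hj), mul_zero]
    rw [hz, add_zero, ← Finset.sum_attach Z (fun j => A i j * u j),
      ← Finset.univ_eq_attach]
    rfl
  have hv0 : v = 0 := by
    have h2 := congrArg (fun w => (subm A Z Z)⁻¹.mulVec w) hv
    simpa [mulVec_mulVec, nonsing_inv_mul _ hZ] using h2
  funext i
  by_cases hi : i ∈ Z
  · exact congrFun hv0 ⟨i, hi⟩
  · exact hout i hi

/-- kernel-type subspace: vectors vanishing on X whose image vanishes on X -/
def cutKer (A : Matrix V V F) (X : Finset V) : Submodule F (V → F) where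
  carrier := {u | ∀ i ∈ X, u i = 0 ∧ A.mulVec u i = 0}
  add_mem' := by
    intro a b ha hb i hi
    refine ⟨?_, ?_⟩
    · rw [Pi.add_apply, (ha i hi).1, (hb i hi).1, add_zero]
    · rw [mulVec_add, Pi.add_apply, (ha i hi).2, (hb i hi).2, add_zero]
  zero_mem' := by intro i hi; simp
  smul_mem' := by
    intro c a ha i hi
    refine ⟨?_, ?_⟩
    · rw [Pi.smul_apply, (ha i hi).1, smul_zero]
    · rw [mulVec_smul, Pi.smul_apply, (ha i hi).2, smul_zero]

/-- extension by zero -/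
def ext0 (X : Finset V) : ((Xᶜ : Finset V) → F) →ₗ[F] (V → F) where
  toFun v := fun j => if h : j ∈ (Xᶜ : Finset V) then v ⟨j, h⟩ else 0
  map_add' a b := by funext j; by_cases h : j ∈ X <;> simp [h, Finset.mem_compl]
  map_smul' c a := by funext j; by_cases h : j ∈ X <;> simp [h, Finset.mem_compl]

lemma ext0_mulVec (A : Matrix V V F) (X : Finset V) (v : (Xᶜ : Finset V) → F)
    (i : V) (hi : i ∈ X) :
    A.mulVec (ext0 X v) i = (subm A X Xᶜ).mulVec v ⟨i, hi⟩ := by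
  rw [mulVec, dotProduct, mulVec, dotProduct,
    ← Finset.sum_add_sum_compl (Xᶜ : Finset V) (fun j => A i j * ext0 X v j)]
  have hz : ∑ j ∈ (Xᶜ : Finset V)ᶜ, A i j * ext0 X v j = 0 :=
    Finset.sum_eq_zero fun j hj => by
      rw [Finset.mem_compl] at hj
      have hjX : j ∈ X := by simpa using hj
      simp only [ext0, LinearMap.coe_mk, AddHom.coe_mk]
      rw [dif_neg hj, mul_zero]
  rw [hz, add_zero, ← Finset.sum_attach (Xᶜ : Finset V)
    (fun j => A i j * ext0 X v j), ← Finset.univ_eq_attach]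
  refine Finset.sum_congr rfl fun k _ => ?_
  have hk : (k : V) ∉ X := Finset.mem_compl.mp k.2
  simp [ext0, k.2, hk, subm, mulVec]

lemma nullity_eq_cutKer (A : Matrix V V F) (X : Finset V) :
    nullity (subm A X Xᶜ) = Module.finrank F (cutKer A X) := by
  have hmem : ∀ v ∈ LinearMap.ker (subm A X Xᶜ).mulVecLin,
      ext0 X v ∈ cutKer A X := by
    intro v hv i hi
    rw [LinearMap.mem_ker, mulVecLin_apply] at hv
    constructor
    · simp [ext0, Finset.mem_compl, hi]
    · rw [ext0_mulVec A X v i hi, hv]; rfl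
  set f : LinearMap.ker (subm A X Xᶜ).mulVecLin →ₗ[F] cutKer A X :=
    LinearMap.codRestrict (cutKer A X)
      ((ext0 X).comp (LinearMap.ker (subm A X Xᶜ).mulVecLin).subtype)
      (fun v => hmem v v.2) with hf
  have hbij : Function.Bijective f := by
    constructor
    · intro a b hab
      apply Subtype.ext
      funext k
      have := congrFun (congrArg Subtype.val hab) (k : V)
      simpa [f, ext0, LinearMap.codRestrict, Finset.mem_compl.mp k.2] using this
    · rintro ⟨u, hu⟩
      set v : (Xᶜ : Finset V) → F := fun k => u ↑k with hvdef
      have hext : ext0 X v = u := by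
        funext j
        by_cases hj : j ∈ X
        · have h2 : j ∉ (Xᶜ : Finset V) := by simp [hj]
          simp only [ext0, LinearMap.coe_mk, AddHom.coe_mk]
          rw [dif_neg h2, (hu j hj).1]
        · have h2 : j ∈ (Xᶜ : Finset V) := Finset.mem_compl.mpr hj
          simp only [ext0, LinearMap.coe_mk, AddHom.coe_mk]
          rw [dif_pos h2]
      have hvker : v ∈ LinearMap.ker (subm A X Xᶜ).mulVecLin := by
        rw [LinearMap.mem_ker, mulVecLin_apply]
        funext k
        obtain ⟨i, hik⟩ := k
        rw [← ext0_mulVec A X v i hik, hext, Pi.zero_apply, (hu i hik).2]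
      exact ⟨⟨v, hvker⟩, Subtype.ext hext⟩
  rw [nullity]
  exact (LinearEquiv.ofBijective f hbij).finrank_eq

lemma mem_cutKer {A : Matrix V V F} {X : Finset V} {u : V → F} :
    u ∈ cutKer A X ↔ ∀ i ∈ X, u i = 0 ∧ A.mulVec u i = 0 := Iff.rfl

lemma cutKer_map (A : Matrix V V F) (Z : Finset V) (hZ : IsUnit (subm A Z Z).det)
    (X : Finset V) :
    (cutKer A X).map (MT A Z).mulVecLin = cutKer (ppt A Z) X := by
  have hsurj : Function.Surjective (MT A Z).mulVecLin :=
    LinearMap.injective_iff_surjective.mp (MT_inj A Z hZ)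
  have hms : ∀ u : V → F,
      (ppt A Z).mulVec ((MT A Z).mulVec u) = (MS A Z).mulVec u := by
    intro u
    rw [mulVec_mulVec, key A Z hZ]
  apply le_antisymm
  · rintro x ⟨u, hu, rfl⟩
    rw [SetLike.mem_coe, mem_cutKer] at hu
    rw [mem_cutKer]
    intro i hi
    rw [mulVecLin_apply, hms u]
    constructor
    · rw [MT_mulVec]; by_cases hiz : i ∈ Z
      · rw [if_pos hiz]; exact (hu i hi).2
      · rw [if_neg hiz]; exact (hu i hi).1
    · rw [MS_mulVec]; by_cases hiz : i ∈ Z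
      · rw [if_pos hiz]; exact (hu i hi).1
      · rw [if_neg hiz]; exact (hu i hi).2
  · intro u' hu'
    obtain ⟨u, rfl⟩ := hsurj u'
    refine ⟨u, ?_, rfl⟩
    rw [mem_cutKer] at hu'
    rw [SetLike.mem_coe, mem_cutKer]
    intro i hi
    obtain ⟨h1, h2⟩ := hu' i hi
    rw [mulVecLin_apply, MT_mulVec] at h1
    rw [mulVecLin_apply, hms u, MS_mulVec] at h2
    by_cases hiz : i ∈ Z
    · rw [if_pos hiz] at h1 h2; exact ⟨h2, h1⟩
    · rw [if_neg hiz] at h1 h2; exact ⟨h1, h2⟩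


/-- Nullity/rank of the off-diagonal submatrices A[X, V∖X] is invariant under PPT. -/
theorem nullity_rank_cut_invariant_ppt (A : Matrix V V F) (Z : Finset V)
    (hZ : IsUnit (subm A Z Z).det) (X : Finset V) :
    nullity (subm (ppt A Z) X Xᶜ) = nullity (subm A X Xᶜ) ∧
    (subm (ppt A Z) X Xᶜ).rank = (subm A X Xᶜ).rank := by
  have hnull : nullity (subm (ppt A Z) X Xᶜ) = nullity (subm A X Xᶜ) := by
    rw [nullity_eq_cutKer, nullity_eq_cutKer, ← cutKer_map A Z hZ X,
      ← (Submodule.equivMapOfInjective _ (MT_inj A Z hZ) (cutKer A X)).finrank_eq]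
  refine ⟨hnull, ?_⟩
  have r1 := LinearMap.finrank_range_add_finrank_ker (subm (ppt A Z) X Xᶜ).mulVecLin
  have r2 := LinearMap.finrank_range_add_finrank_ker (subm A X Xᶜ).mulVecLin
  have hr : (subm (ppt A Z) X Xᶜ).rank + nullity (subm (ppt A Z) X Xᶜ)
      = (subm A X Xᶜ).rank + nullity (subm A X Xᶜ) := by
    rw [Matrix.rank, Matrix.rank, nullity, nullity, r1, r2]
  omega
end

section
/- Let A be a V×V-matrix over a field and Z ⊆ V with A[Z,Z] nonsingular. Then for all X ⊆ V, the nullity of (A*Z)[X,X] equals the nullity of A[X △ Z, X △ Z], where △ denotes symmetric difference. -/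
open Matrix
open scoped symmDiff

variable {V F : Type*} [Fintype V] [DecidableEq V] [Field F]

/-!
Split the index set as `Z ⊔ Zᶜ`. In block form `A = [[P, Q], [R, S]]` and
`A*Z = [[P⁻¹, -P⁻¹Q], [RP⁻¹, S - RP⁻¹Q]]`, so `A` and `A*Z` are exchanged by swapping the
`Z`-coordinates of a vector and of its image: if `y = (A*Z) x`, then `A` sends the vector that
agrees with `y` on `Z` and with `x` off `Z` to the vector that agrees with `x` on `Z` and with `y`
off `Z`, and symmetrically. This swap is a linear bijection, and it carries the vectors supported
on `X` whose image under `A*Z` vanishes on `X` onto the vectors supported on `X ∆ Z` whose image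
under `A` vanishes on `X ∆ Z`, i.e. the kernel of `(A*Z)[X,X]` onto that of `A[X ∆ Z, X ∆ Z]`.
-/

namespace Matrix

section BlockPivot

variable {m n R : Type*} [DecidableEq m] [DecidableEq n]

theorem one_sub_fromBlocks_one_zero_zero_zero [Ring R] :
    (1 - fromBlocks 1 0 0 0 : Matrix (m ⊕ n) (m ⊕ n) R) = fromBlocks 0 0 0 1 := by
  rw [← fromBlocks_one, sub_eq_add_neg, fromBlocks_neg, fromBlocks_add]
  simp

variable [CommRing R] [Fintype m]

noncomputable def blockPivot (M : Matrix (m ⊕ n) (m ⊕ n) R) : Matrix (m ⊕ n) (m ⊕ n) R :=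
  fromBlocks M.toBlocks₁₁⁻¹ (-(M.toBlocks₁₁⁻¹ * M.toBlocks₁₂)) (M.toBlocks₂₁ * M.toBlocks₁₁⁻¹)
    (M.toBlocks₂₂ - M.toBlocks₂₁ * M.toBlocks₁₁⁻¹ * M.toBlocks₁₂)

variable [Fintype n]

theorem mul_exchange_blockPivot (M : Matrix (m ⊕ n) (m ⊕ n) R) (hM : IsUnit M.toBlocks₁₁.det) :
    M * (fromBlocks 1 0 0 0 * M.blockPivot + (1 - fromBlocks 1 0 0 0)) =
      fromBlocks 1 0 0 0 + (1 - fromBlocks 1 0 0 0) * M.blockPivot := by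
  conv_lhs => rw [← fromBlocks_toBlocks M]
  simp only [blockPivot, one_sub_fromBlocks_one_zero_zero_zero, fromBlocks_multiply, fromBlocks_add]
  simp [mul_nonsing_inv _ hM, ← Matrix.mul_assoc, neg_add_eq_sub]

theorem blockPivot_mul_exchange (M : Matrix (m ⊕ n) (m ⊕ n) R) (hM : IsUnit M.toBlocks₁₁.det) :
    M.blockPivot * (fromBlocks 1 0 0 0 * M + (1 - fromBlocks 1 0 0 0)) =
      fromBlocks 1 0 0 0 + (1 - fromBlocks 1 0 0 0) * M := by
  conv_lhs => rw [← fromBlocks_toBlocks M]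
  conv_rhs => rw [← fromBlocks_toBlocks M]
  simp only [blockPivot, one_sub_fromBlocks_one_zero_zero_zero, fromBlocks_multiply, fromBlocks_add]
  simp [nonsing_inv_mul _ hM, Matrix.mul_assoc]

end BlockPivot

end Matrix

section Exchange

variable {ι R : Type*} [DecidableEq ι]

def projMatrix [Zero R] [One R] (s : Finset ι) : Matrix ι ι R :=
  diagonal fun i => if i ∈ s then 1 else 0

theorem projMatrix_submatrix_sumCompl [Zero R] [One R] (s : Finset ι) :
    (projMatrix s : Matrix ι ι R).submatrix (Equiv.sumCompl (· ∈ s)) (Equiv.sumCompl (· ∈ s)) =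
      fromBlocks 1 0 0 0 := by
  ext (i | i) (j | j) <;>
    simp only [projMatrix, submatrix_apply, Equiv.sumCompl_apply_inl, Equiv.sumCompl_apply_inr,
      diagonal_apply, one_apply, SetLike.coe_eq_coe, fromBlocks_apply₁₁, fromBlocks_apply₁₂,
      fromBlocks_apply₂₁, fromBlocks_apply₂₂, Matrix.zero_apply, i.2, ↓reduceIte, ite_self]
  exact if_neg (ne_of_mem_of_not_mem i.2 j.2)

variable [Fintype ι] [Ring R]

theorem projMatrix_mul_add_mulVec (s : Finset ι) (M : Matrix ι ι R) (x : ι → R) :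
    (projMatrix s * M + (1 - projMatrix s)) *ᵥ x = s.piecewise (M *ᵥ x) x := by
  ext i
  by_cases hi : i ∈ s <;>
    simp [projMatrix, add_mulVec, sub_mulVec, ← mulVec_mulVec, mulVec_diagonal, hi]

theorem projMatrix_add_mul_mulVec (s : Finset ι) (M : Matrix ι ι R) (x : ι → R) :
    (projMatrix s + (1 - projMatrix s) * M) *ᵥ x = s.piecewise x (M *ᵥ x) := by
  ext i
  by_cases hi : i ∈ s <;>
    simp [projMatrix, add_mulVec, sub_mulVec, ← mulVec_mulVec, mulVec_diagonal, hi]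

theorem mulVec_piecewise_of_mul_exchange {s : Finset ι} {M N : Matrix ι ι R}
    (h : M * (projMatrix s * N + (1 - projMatrix s)) = projMatrix s + (1 - projMatrix s) * N)
    (x : ι → R) : M *ᵥ s.piecewise (N *ᵥ x) x = s.piecewise x (N *ᵥ x) := by
  rw [← projMatrix_mul_add_mulVec, mulVec_mulVec, h, projMatrix_add_mul_mulVec]

end Exchange

section PPT

variable {ι K : Type*} [DecidableEq ι] [Field K]

theorem ppt_submatrix_sumCompl (A : Matrix ι ι K) (Z : Finset ι) :
    (ppt A Z).submatrix (Equiv.sumCompl (· ∈ Z)) (Equiv.sumCompl (· ∈ Z)) =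
      (A.submatrix (Equiv.sumCompl (· ∈ Z)) (Equiv.sumCompl (· ∈ Z))).blockPivot := by
  ext (i | i) (j | j) <;>
    simp only [ppt, blockPivot, submatrix_apply, Equiv.sumCompl_apply_inl,
      Equiv.sumCompl_apply_inr, fromBlocks_apply₁₁, fromBlocks_apply₁₂, fromBlocks_apply₂₁,
      fromBlocks_apply₂₂, Matrix.neg_apply, Matrix.sub_apply, mul_apply, i.2, j.2, ↓reduceDIte]
  · rfl
  · rfl
  · rfl
  · simp only [Finset.sum_mul]
    rw [Finset.sum_comm]
    rfl

variable [Fintype ι]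

theorem mul_exchange_ppt (A : Matrix ι ι K) {Z : Finset ι} (hZ : IsUnit (subm A Z Z).det) :
    A * (projMatrix Z * ppt A Z + (1 - projMatrix Z)) =
      projMatrix Z + (1 - projMatrix Z) * ppt A Z := by
  apply (reindexRingEquiv K (Equiv.sumCompl (· ∈ Z)).symm).injective
  simp only [map_mul, map_add, map_sub, map_one, coe_reindexRingEquiv, reindex_apply,
    Equiv.symm_symm, projMatrix_submatrix_sumCompl, ppt_submatrix_sumCompl]
  exact mul_exchange_blockPivot
    (A.submatrix (Equiv.sumCompl (· ∈ Z)) (Equiv.sumCompl (· ∈ Z))) hZ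

theorem ppt_mul_exchange (A : Matrix ι ι K) {Z : Finset ι} (hZ : IsUnit (subm A Z Z).det) :
    ppt A Z * (projMatrix Z * A + (1 - projMatrix Z)) =
      projMatrix Z + (1 - projMatrix Z) * A := by
  apply (reindexRingEquiv K (Equiv.sumCompl (· ∈ Z)).symm).injective
  simp only [map_mul, map_add, map_sub, map_one, coe_reindexRingEquiv, reindex_apply,
    Equiv.symm_symm, projMatrix_submatrix_sumCompl, ppt_submatrix_sumCompl]
  exact blockPivot_mul_exchange
    (A.submatrix (Equiv.sumCompl (· ∈ Z)) (Equiv.sumCompl (· ∈ Z))) hZ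

end PPT

section PrincipalKer

variable {ι K : Type*} [Fintype ι] [Field K]

def principalKer (M : Matrix ι ι K) (X : Finset ι) : Submodule K (ι → K) where
  carrier := {x | (∀ i ∉ X, x i = 0) ∧ ∀ i ∈ X, (M *ᵥ x) i = 0}
  add_mem' hx hy := ⟨fun i hi => by simp [hx.1 i hi, hy.1 i hi],
    fun i hi => by simp [mulVec_add, hx.2 i hi, hy.2 i hi]⟩
  zero_mem' := ⟨fun _ _ => rfl, fun _ _ => by simp⟩
  smul_mem' c x hx := ⟨fun i hi => by simp [hx.1 i hi],
    fun i hi => by simp [mulVec_smul, hx.2 i hi]⟩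

theorem subm_mulVec_comp_val (M : Matrix ι ι K) {X : Finset ι} {x : ι → K}
    (hx : ∀ i ∉ X, x i = 0) : subm M X X *ᵥ (x ∘ (↑)) = (M *ᵥ x) ∘ (↑) := by
  ext i
  simp only [mulVec, dotProduct, subm, submatrix_apply, Function.comp_apply]
  rw [Finset.sum_coe_sort X (fun j => M i j * x j)]
  exact Finset.sum_subset (Finset.subset_univ X) fun j _ hj => by simp [hx j hj]

theorem nullity_subm_eq_finrank_principalKer (M : Matrix ι ι K) (X : Finset ι) :
    nullity (subm M X X) = Module.finrank K (principalKer M X) := by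
  let extendByZero := Function.ExtendByZero.linearMap K ((↑) : X → ι)
  have hext : ∀ y, extendByZero y ∘ (↑) = y := fun y =>
    funext (Subtype.val_injective.extend_apply y 0)
  have hsupp : ∀ y, ∀ i ∉ X, extendByZero y i = 0 := fun y i hi =>
    Function.extend_apply' _ _ _ fun ⟨j, hj⟩ => hi (hj ▸ j.2)
  have hmap : (LinearMap.ker (subm M X X).mulVecLin).map extendByZero = principalKer M X := by
    ext x
    constructor
    · rintro ⟨y, hy, rfl⟩
      refine ⟨hsupp y, fun i hi => ?_⟩
      have hyi := congrFun (LinearMap.mem_ker.1 hy) ⟨i, hi⟩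
      rwa [mulVecLin_apply, ← hext y, subm_mulVec_comp_val M (hsupp y)] at hyi
    · rintro ⟨hx, hMx⟩
      refine ⟨x ∘ (↑), ?_, funext fun i => ?_⟩
      · ext i
        simpa [subm_mulVec_comp_val M hx] using hMx i i.2
      · by_cases hi : i ∈ X
        · exact congrFun (hext _) ⟨i, hi⟩
        · rw [hsupp _ i hi, hx i hi]
  rw [nullity, ← hmap]
  exact (Submodule.equivMapOfInjective extendByZero
    (Function.extend_injective Subtype.val_injective (0 : ι → K)) _).finrank_eq

variable [DecidableEq ι] {A B : Matrix ι ι K} {Z : Finset ι}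

theorem piecewise_mem_principalKer_symmDiff
    (hAB : A * (projMatrix Z * B + (1 - projMatrix Z)) = projMatrix Z + (1 - projMatrix Z) * B)
    {X : Finset ι} {x : ι → K} (hx : x ∈ principalKer B X) :
    Z.piecewise (B *ᵥ x) x ∈ principalKer A (X ∆ Z) := by
  obtain ⟨hsupp, hker⟩ := hx
  refine ⟨fun i hi => ?_, fun i hi => ?_⟩
  · rw [Finset.mem_symmDiff] at hi
    by_cases hiZ : i ∈ Z
    · rw [Finset.piecewise_eq_of_mem _ _ _ hiZ]
      exact hker i (by tauto)
    · rw [Finset.piecewise_eq_of_notMem _ _ _ hiZ]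
      exact hsupp i (by tauto)
  · rw [Finset.mem_symmDiff] at hi
    rw [mulVec_piecewise_of_mul_exchange hAB]
    by_cases hiZ : i ∈ Z
    · rw [Finset.piecewise_eq_of_mem _ _ _ hiZ]
      exact hsupp i (by tauto)
    · rw [Finset.piecewise_eq_of_notMem _ _ _ hiZ]
      exact hker i (by tauto)

theorem finrank_principalKer_eq_finrank_principalKer_symmDiff
    (hAB : A * (projMatrix Z * B + (1 - projMatrix Z)) = projMatrix Z + (1 - projMatrix Z) * B)
    (hBA : B * (projMatrix Z * A + (1 - projMatrix Z)) = projMatrix Z + (1 - projMatrix Z) * A)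
    (X : Finset ι) :
    Module.finrank K (principalKer B X) = Module.finrank K (principalKer A (X ∆ Z)) := by
  let e : (ι → K) ≃ₗ[K] (ι → K) := LinearEquiv.ofLinearMap
    (projMatrix Z * B + (1 - projMatrix Z)).mulVecLin
    (projMatrix Z * A + (1 - projMatrix Z)).mulVecLin
    (LinearMap.ext fun y => by
      simp only [LinearMap.comp_apply, mulVecLin_apply, projMatrix_mul_add_mulVec,
        mulVec_piecewise_of_mul_exchange hBA, Finset.piecewise_idem_left,
        Finset.piecewise_idem_right, Finset.piecewise_same, LinearMap.id_apply])
    (LinearMap.ext fun x => by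
      simp only [LinearMap.comp_apply, mulVecLin_apply, projMatrix_mul_add_mulVec,
        mulVec_piecewise_of_mul_exchange hAB, Finset.piecewise_idem_left,
        Finset.piecewise_idem_right, Finset.piecewise_same, LinearMap.id_apply])
  have hmap : (principalKer B X).map (e : (ι → K) →ₗ[K] (ι → K)) = principalKer A (X ∆ Z) := by
    refine le_antisymm (Submodule.map_le_iff_le_comap.2 fun x hx => ?_) fun y hy => ?_
    · simpa only [e, Submodule.mem_comap, LinearEquiv.coe_coe, LinearEquiv.coe_ofLinearMap,
        mulVecLin_apply, projMatrix_mul_add_mulVec]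
        using piecewise_mem_principalKer_symmDiff hAB hx
    · refine ⟨e.symm y, ?_, e.apply_symm_apply y⟩
      have hy' := piecewise_mem_principalKer_symmDiff hBA hy
      rw [symmDiff_symmDiff_cancel_right] at hy'
      simpa only [e, SetLike.mem_coe, LinearEquiv.symm_ofLinearMap, LinearEquiv.coe_ofLinearMap,
        mulVecLin_apply, projMatrix_mul_add_mulVec] using hy'
  exact (e.ofSubmodules _ _ hmap).finrank_eq

end PrincipalKer

/-- Nullity of principal submatrices under PPT: n((A*Z)[X,X]) = n(A[X △ Z, X △ Z]). -/
theorem nullity_principal_submatrix_ppt (A : Matrix V V F) (Z : Finset V)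
    (hZ : IsUnit (subm A Z Z).det) (X : Finset V) :
    nullity (subm (ppt A Z) X X) = nullity (subm A (X ∆ Z) (X ∆ Z)) := by
  rw [nullity_subm_eq_finrank_principalKer, nullity_subm_eq_finrank_principalKer]
  exact finrank_principalKer_eq_finrank_principalKer_symmDiff
    (mul_exchange_ppt A hZ) (ppt_mul_exchange A hZ) X
end

section
/- Let A be a V×V-matrix over a field and Z ⊆ V with A[Z,Z] nonsingular. Then for vectors x, y ∈ 𝔽^V: A x = y if and only if (A*Z) x' = y', where x'[i] = y[i] for i ∈ Z and x'[i] = x[i] for i ∉ Z, and y'[i] = x[i] for i ∈ Z and y'[i] = y[i] for i ∉ Z. -/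
open Matrix
open scoped symmDiff

variable {V F : Type*} [Fintype V] [DecidableEq V] [Field F]

/-- The exchange property characterizing PPT as a partial inverse along Z. -/
theorem ppt_exchange (A : Matrix V V F) (Z : Finset V)
    (hZ : IsUnit (subm A Z Z).det) (x y : V → F) :
    A.mulVec x = y ↔
      (ppt A Z).mulVec (fun i => if i ∈ Z then y i else x i) =
        (fun i => if i ∈ Z then x i else y i) := by
  classical
  have hSB : ∀ a b : Z, (∑ k : Z, A (a:V) (k:V) * (subm A Z Z)⁻¹ k b)
      = if a = b then (1:F) else 0 := by
    intro a b
    simpa [Matrix.mul_apply, Matrix.one_apply, subm, Matrix.submatrix_apply] using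
      congrFun (congrFun (Matrix.mul_nonsing_inv _ hZ) a) b
  have hBS : ∀ a b : Z, (∑ k : Z, (subm A Z Z)⁻¹ a k * A (k:V) (b:V))
      = if a = b then (1:F) else 0 := by
    intro a b
    simpa [Matrix.mul_apply, Matrix.one_apply, subm, Matrix.submatrix_apply] using
      congrFun (congrFun (Matrix.nonsing_inv_mul _ hZ) a) b
  set B := (subm A Z Z)⁻¹ with hB
  set cV : V → F := fun i => ∑ j ∈ Zᶜ, A i j * x j with hc
  have split : ∀ f : V → F, (∑ j, f j) = (∑ k : Z, f k) + ∑ j ∈ Zᶜ, f j := by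
    intro f
    rw [← Finset.sum_add_sum_compl Z f, ← Finset.sum_coe_sort Z f]
  have rearr : ∀ (u : Z → F) (M : Matrix Z Z F) (v : Z → F),
      (∑ k : Z, u k * ∑ l : Z, M k l * v l) = ∑ l : Z, (∑ k : Z, u k * M k l) * v l := by
    intro u M v
    simp_rw [Finset.mul_sum, ← mul_assoc]
    rw [Finset.sum_comm]
    simp_rw [Finset.sum_mul]
  have swap : ∀ (g : Z → V → F),
      (∑ j ∈ Zᶜ, (∑ k : Z, g k j) * x j) = ∑ k : Z, ∑ j ∈ Zᶜ, g k j * x j := by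
    intro g
    simp_rw [Finset.sum_mul]
    exact Finset.sum_comm
  have hAx : ∀ i, A.mulVec x i = (∑ k : Z, A i k * x k) + cV i := by
    intro i
    rw [show A.mulVec x i = ∑ j, A i j * x j from rfl, split]
  have formula1 : ∀ i (hi : i ∈ Z),
      (ppt A Z).mulVec (fun i => if i ∈ Z then y i else x i) i
        = ∑ k : Z, B ⟨i, hi⟩ k * (y k - cV k) := by
    intro i hi
    rw [show (ppt A Z).mulVec (fun i => if i ∈ Z then y i else x i) i
        = ∑ j, ppt A Z i j * (if j ∈ Z then y j else x j) from rfl, split]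
    have h2 : (∑ k : Z, ppt A Z i k * (if (k:V) ∈ Z then y k else x k))
        = ∑ k : Z, B ⟨i,hi⟩ k * y k := by
      refine Finset.sum_congr rfl fun k _ => ?_
      simp [ppt, hi, k.2, hB]
    have h3 : (∑ j ∈ Zᶜ, ppt A Z i j * (if j ∈ Z then y j else x j))
        = - ∑ k : Z, B ⟨i,hi⟩ k * cV k := by
      have h3a : (∑ j ∈ Zᶜ, ppt A Z i j * (if j ∈ Z then y j else x j))
          = ∑ j ∈ Zᶜ, (- ∑ k : Z, B ⟨i,hi⟩ k * A k j) * x j := by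
        refine Finset.sum_congr rfl fun j hj => ?_
        have hj' : j ∉ Z := Finset.mem_compl.mp hj
        simp [ppt, hi, hj', hB]
      rw [h3a]
      simp_rw [neg_mul, Finset.sum_neg_distrib]
      rw [swap fun k j => B ⟨i,hi⟩ k * A k j]
      congr 1
      refine Finset.sum_congr rfl fun k _ => ?_
      rw [hc, Finset.mul_sum]
      simp_rw [mul_assoc]
    rw [h2, h3, ← sub_eq_add_neg, ← Finset.sum_sub_distrib]
    exact Finset.sum_congr rfl fun k _ => by ring
  have formula2 : ∀ i, i ∉ Z →
      (ppt A Z).mulVec (fun i => if i ∈ Z then y i else x i) i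
        = (∑ k : Z, (∑ l : Z, A i l * B l k) * (y k - cV k)) + cV i := by
    intro i hi
    rw [show (ppt A Z).mulVec (fun i => if i ∈ Z then y i else x i) i
        = ∑ j, ppt A Z i j * (if j ∈ Z then y j else x j) from rfl, split]
    have h2 : (∑ k : Z, ppt A Z i k * (if (k:V) ∈ Z then y k else x k))
        = ∑ k : Z, (∑ l : Z, A i l * B l k) * y k := by
      refine Finset.sum_congr rfl fun k _ => ?_
      simp [ppt, hi, k.2, hB]
    have h3 : (∑ j ∈ Zᶜ, ppt A Z i j * (if j ∈ Z then y j else x j))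
        = cV i - ∑ k : Z, (∑ l : Z, A i l * B l k) * cV k := by
      have h3a : (∑ j ∈ Zᶜ, ppt A Z i j * (if j ∈ Z then y j else x j))
          = ∑ j ∈ Zᶜ, (A i j - ∑ k : Z, ∑ l : Z, A i k * B k l * A l j) * x j := by
        refine Finset.sum_congr rfl fun j hj => ?_
        have hj' : j ∉ Z := Finset.mem_compl.mp hj
        simp [ppt, hi, hj', hB]
      rw [h3a]
      simp_rw [sub_mul]
      rw [Finset.sum_sub_distrib]
      congr 1
      have hsw : ∀ j, (∑ k : Z, ∑ l : Z, A i k * B k l * A l j)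
          = ∑ l : Z, (∑ k : Z, A i k * B k l) * A l j := by
        intro j
        rw [Finset.sum_comm]
        exact Finset.sum_congr rfl fun l _ => by rw [Finset.sum_mul]
      simp_rw [hsw]
      rw [swap fun l j => (∑ k : Z, A i k * B k l) * A l j]
      refine Finset.sum_congr rfl fun l _ => ?_
      rw [hc, Finset.mul_sum]
      simp_rw [mul_assoc]
    rw [h2, h3]
    have hcomb : (∑ k : Z, (∑ l : Z, A i l * B l k) * y k)
        - (∑ k : Z, (∑ l : Z, A i l * B l k) * cV k)
        = ∑ k : Z, (∑ l : Z, A i l * B l k) * (y k - cV k) := by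
      rw [← Finset.sum_sub_distrib]
      exact Finset.sum_congr rfl fun k _ => by ring
    rw [← hcomb]
    ring
  constructor
  · intro h
    have hy : ∀ i, A.mulVec x i = y i := fun i => congrFun h i
    have hd : ∀ k : Z, y (k:V) - cV k = ∑ l : Z, A (k:V) (l:V) * x l := by
      intro k
      have h1 := hAx k
      rw [hy k] at h1
      linear_combination h1
    funext i
    by_cases hi : i ∈ Z
    · rw [formula1 i hi]
      simp only [hd]
      rw [rearr (fun k => B ⟨i,hi⟩ k) (fun k l => A (k:V) (l:V)) (fun l => x (l:V))]
      have he : ∀ l : Z, (∑ k : Z, B ⟨i,hi⟩ k * A (k:V) (l:V))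
          = if (⟨i,hi⟩ : Z) = l then (1:F) else 0 := fun l => hBS ⟨i,hi⟩ l
      simp_rw [he, ite_mul, one_mul, zero_mul]
      simp [hi]
    · rw [formula2 i hi]
      simp only [hd]
      rw [rearr (fun k => ∑ l : Z, A i l * B l k) (fun k m => A (k:V) (m:V)) (fun l => x (l:V))]
      have hre : ∀ m : Z, (∑ k : Z, (∑ l : Z, A i l * B l k) * A (k:V) (m:V))
          = A i m := by
        intro m
        have h4 : (∑ k : Z, (∑ l : Z, A i l * B l k) * A (k:V) (m:V))
            = ∑ l : Z, A i l * ∑ k : Z, B l k * A (k:V) (m:V) := by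
          simp_rw [Finset.sum_mul, Finset.mul_sum, ← mul_assoc]
          exact Finset.sum_comm
        rw [h4]
        simp_rw [hBS]
        simp
      simp_rw [hre]
      rw [← hAx, hy]
      simp [hi]
  · intro h
    have h' : ∀ i, (ppt A Z).mulVec (fun i => if i ∈ Z then y i else x i) i
        = if i ∈ Z then x i else y i := fun i => congrFun h i
    have hx : ∀ a : Z, x (a:V) = ∑ k : Z, B a k * (y k - cV k) := by
      intro a
      have h1 := h' a
      rw [formula1 a a.2, if_pos a.2] at h1
      exact h1.symm
    have hd : ∀ a : Z, y (a:V) - cV a = ∑ l : Z, A (a:V) (l:V) * x l := by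
      intro a
      have h1 : (∑ l : Z, A (a:V) (l:V) * x l)
          = ∑ l : Z, A (a:V) (l:V) * ∑ k : Z, B l k * (y k - cV k) :=
        Finset.sum_congr rfl fun l _ => by rw [← hx l]
      rw [h1, rearr (fun l => A (a:V) (l:V)) B (fun k => y (k:V) - cV k)]
      simp_rw [hSB, ite_mul, one_mul, zero_mul]
      simp
    funext i
    by_cases hi : i ∈ Z
    · rw [hAx i]
      have h1 : y i - cV i = ∑ l : Z, A i (l:V) * x l := hd ⟨i, hi⟩
      linear_combination -h1
    · have h2 := h' i
      rw [formula2 i hi, if_neg hi] at h2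
      rw [hAx i, ← h2]
      congr 1
      have h3 : (∑ k : Z, A i k * x k)
          = ∑ k : Z, A i k * ∑ m : Z, B k m * (y m - cV m) :=
        Finset.sum_congr rfl fun k _ => by rw [← hx k]
      rw [h3, rearr (fun k => A i k) B (fun m => y m - cV m)]
end

section
/- Let A be a V×V-matrix over a field and X ⊆ V with A[X,X] nonsingular. Define A♯X as the matrix obtained from A by replacing each row of A with index v ∈ V∖X by the standard basis row vector e_v (value 1 at index v, 0 elsewhere). Then A♯X is nonsingular and (A♯X)⁻¹ = (A*X)♯X. -/
open Matrix
open scoped symmDiff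

variable {V F : Type*} [Fintype V] [DecidableEq V] [Field F]

/-- A♯Z: equal to A on rows indexed by Z, and to the identity on rows outside Z. -/
def sharp (A : Matrix V V F) (Z : Finset V) : Matrix V V F :=
  fun i j => if i ∈ Z then A i j else if i = j then 1 else 0

theorem sharp_key (A : Matrix V V F) (X : Finset V) (hX : IsUnit (subm A X X).det) :
    sharp A X * sharp (ppt A X) X = 1 := by
  have hMi : subm A X X * (subm A X X)⁻¹ = 1 := mul_nonsing_inv _ hX
  ext i j
  rw [Matrix.mul_apply]
  by_cases hi : i ∈ X
  · rw [← Finset.sum_add_sum_compl X, Matrix.one_apply]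
    by_cases hj : j ∈ X
    · have h2 : ∑ k ∈ Xᶜ, sharp A X i k * sharp (ppt A X) X k j = 0 := by
        refine Finset.sum_eq_zero fun k hk => ?_
        have hk' := Finset.mem_compl.mp hk
        have hkj : k ≠ j := fun h => hk' (h ▸ hj)
        simp [sharp, hk', hkj]
      rw [h2, add_zero, ← Finset.sum_coe_sort]
      have hterm : ∀ k : X, sharp A X i ↑k * sharp (ppt A X) X ↑k j
          = subm A X X ⟨i, hi⟩ k * (subm A X X)⁻¹ k ⟨j, hj⟩ := by
        intro k
        simp [sharp, ppt, hi, hj, k.2, subm]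
      rw [Finset.sum_congr rfl fun k _ => hterm k, ← Matrix.mul_apply, hMi, Matrix.one_apply]
      simp [Subtype.ext_iff]
    · have hij : i ≠ j := fun h => hj (h ▸ hi)
      have h2 : ∑ k ∈ Xᶜ, sharp A X i k * sharp (ppt A X) X k j = A i j := by
        rw [Finset.sum_eq_single j (fun k hk hkj => by
              simp [sharp, Finset.mem_compl.mp hk, hkj])
            (fun h => absurd (Finset.mem_compl.mpr hj) h)]
        simp [sharp, hi, hj]
      rw [h2, ← Finset.sum_coe_sort]
      have hterm : ∀ k : X, sharp A X i ↑k * sharp (ppt A X) X ↑k j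
          = A i ↑k * -(∑ l : X, (subm A X X)⁻¹ k l * A ↑l j) := by
        intro k
        simp [sharp, ppt, hi, hj, k.2]
      rw [Finset.sum_congr rfl fun k _ => hterm k]
      have hcalc : ∑ k : X, A i ↑k * -(∑ l : X, (subm A X X)⁻¹ k l * A ↑l j)
          = -A i j := by
        calc ∑ k : X, A i ↑k * -(∑ l : X, (subm A X X)⁻¹ k l * A ↑l j)
            = -∑ k : X, ∑ l : X, A i ↑k * (subm A X X)⁻¹ k l * A ↑l j := by
              simp [Finset.mul_sum, mul_assoc]
          _ = -∑ l : X, ∑ k : X, A i ↑k * (subm A X X)⁻¹ k l * A ↑l j := by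
              rw [Finset.sum_comm]
          _ = -∑ l : X, (subm A X X * (subm A X X)⁻¹) ⟨i, hi⟩ l * A ↑l j := by
              simp [Matrix.mul_apply, Finset.sum_mul, subm]
          _ = -A i j := by
              rw [hMi]; simp [Matrix.one_apply, ite_mul]
      rw [hcalc, if_neg hij]
      simp
  · have hrow : ∀ k, sharp A X i k = if i = k then 1 else 0 := fun k => if_neg hi
    simp only [hrow, ite_mul, one_mul, zero_mul]
    rw [Finset.sum_ite_eq]
    simp [sharp, hi, Matrix.one_apply]

/-- A♯X is nonsingular and (A♯X)⁻¹ = (A*X)♯X. -/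
theorem sharp_inv (A : Matrix V V F) (X : Finset V) (hX : IsUnit (subm A X X).det) :
    IsUnit (sharp A X).det ∧ (sharp A X)⁻¹ = sharp (ppt A X) X :=
  ⟨Matrix.isUnit_det_of_right_inverse (sharp_key A X hX),
   Matrix.inv_eq_right_inv (sharp_key A X hX)⟩
end

section
/- Let A be a V×V-matrix over a field and Z ⊆ V with A[Z,Z] nonsingular. Define A♯Z as the matrix agreeing with A on rows in Z and with the identity matrix on rows in V∖Z. Then for any vector x ∈ 𝔽^V with y = A x: ((A♯Z) x)[i] = y[i] if i ∈ Z and = x[i] otherwise; and ((A*Z)(A♯Z) x)[i] = x[i] if i ∈ Z and = y[i] otherwise. -/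
open Matrix
open scoped symmDiff

variable {V F : Type*} [Fintype V] [DecidableEq V] [Field F]

lemma key_s8 (A : Matrix V V F) (Z : Finset V)
    (hZ : IsUnit (subm A Z Z).det) (x y : V → F) (hy : A.mulVec x = y)
    (k : Z) :
    (∑ j : Z, (subm A Z Z)⁻¹ k j * y j)
      - ∑ j ∈ Zᶜ, (∑ l : Z, (subm A Z Z)⁻¹ k l * A l j) * x j = x k := by
  set B := (subm A Z Z)⁻¹ with hBdef
  have hB : B * subm A Z Z = 1 := Matrix.nonsing_inv_mul _ hZ
  have hBa : ∀ m : Z, (∑ j : Z, B k j * A j m) = if k = m then 1 else 0 := by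
    intro m
    have h := congrFun (congrFun hB k) m
    simpa [Matrix.mul_apply, subm, Matrix.one_apply] using h
  have hyj : ∀ j : Z, y (j : V) = (∑ m : Z, A j m * x m) + ∑ m ∈ Zᶜ, A j m * x m := by
    intro j
    rw [← hy]
    show (∑ m, A j m * x m) = _
    rw [← Finset.sum_add_sum_compl Z, Finset.sum_coe_sort Z (fun m => A j m * x m)]
  have h1 : (∑ j : Z, B k j * y j)
      = (∑ j : Z, ∑ m : Z, B k j * (A j m * x m))
        + ∑ j : Z, ∑ m ∈ Zᶜ, B k j * (A j m * x m) := by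
    rw [← Finset.sum_add_distrib]
    refine Finset.sum_congr rfl fun j _ => ?_
    rw [hyj j, mul_add, Finset.mul_sum, Finset.mul_sum]
  have h2 : (∑ j : Z, ∑ m : Z, B k j * (A j m * x m)) = x k := by
    rw [Finset.sum_comm]
    have : ∀ m : Z, (∑ j : Z, B k j * (A j m * x m)) = (if k = m then 1 else 0) * x m := by
      intro m
      rw [← hBa m, Finset.sum_mul]
      exact Finset.sum_congr rfl fun j _ => by ring
    rw [Finset.sum_congr rfl fun m _ => this m]
    simp
  have h3 : (∑ j : Z, ∑ m ∈ Zᶜ, B k j * (A j m * x m))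
      = ∑ j ∈ Zᶜ, (∑ l : Z, B k l * A l j) * x j := by
    rw [Finset.sum_comm]
    refine Finset.sum_congr rfl fun m _ => ?_
    rw [Finset.sum_mul]
    exact Finset.sum_congr rfl fun j _ => by ring
  rw [h1, h2, h3]
  ring

/-- Action of A♯Z and (A*Z)(A♯Z) on vectors: with y = A x, (A♯Z)x agrees with y on Z
and with x outside Z, while (A*Z)(A♯Z)x agrees with x on Z and with y outside Z. -/
theorem sharp_mulVec (A : Matrix V V F) (Z : Finset V)
    (hZ : IsUnit (subm A Z Z).det) (x y : V → F) (hy : A.mulVec x = y) :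
    (∀ i, (sharp A Z).mulVec x i = if i ∈ Z then y i else x i) ∧
    (∀ i, (ppt A Z).mulVec ((sharp A Z).mulVec x) i = if i ∈ Z then x i else y i) := by
  have hpart1 : ∀ i, (sharp A Z).mulVec x i = if i ∈ Z then y i else x i := by
    intro i
    by_cases hi : i ∈ Z
    · simp only [Matrix.mulVec, dotProduct, sharp, hi, if_true, ← hy]
    · simp [Matrix.mulVec, dotProduct, sharp, hi, ite_mul, one_mul, zero_mul,
        Finset.sum_ite_eq]
  refine ⟨hpart1, fun i => ?_⟩
  have hw : (sharp A Z).mulVec x = fun j => if j ∈ Z then y j else x j := funext hpart1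
  rw [hw]
  show (∑ j, ppt A Z i j * (if j ∈ Z then y j else x j)) = _
  rw [← Finset.sum_add_sum_compl Z]
  by_cases hi : i ∈ Z
  · have e1 : (∑ j ∈ Z, ppt A Z i j * (if j ∈ Z then y j else x j))
        = ∑ j : Z, (subm A Z Z)⁻¹ ⟨i, hi⟩ j * y j := by
      rw [← Finset.sum_attach Z]
      refine Finset.sum_congr rfl fun j _ => ?_
      simp [ppt, hi, j.2]
    have e2 : (∑ j ∈ Zᶜ, ppt A Z i j * (if j ∈ Z then y j else x j))
        = -∑ j ∈ Zᶜ, (∑ l : Z, (subm A Z Z)⁻¹ ⟨i, hi⟩ l * A l j) * x j := by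
      rw [← Finset.sum_neg_distrib]
      refine Finset.sum_congr rfl fun j hj => ?_
      have hj' : j ∉ Z := Finset.mem_compl.mp hj
      simp [ppt, hi, hj']
    rw [e1, e2, if_pos hi]
    have hk : (∑ j : Z, (subm A Z Z)⁻¹ ⟨i, hi⟩ j * y j)
        - ∑ j ∈ Zᶜ, (∑ l : Z, (subm A Z Z)⁻¹ ⟨i, hi⟩ l * A l j) * x j = x i :=
      key_s8 A Z hZ x y hy ⟨i, hi⟩
    linear_combination hk
  · have e1 : (∑ j ∈ Z, ppt A Z i j * (if j ∈ Z then y j else x j))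
        = ∑ j : Z, (∑ l : Z, A i l * (subm A Z Z)⁻¹ l j) * y j := by
      rw [← Finset.sum_attach Z]
      refine Finset.sum_congr rfl fun j _ => ?_
      simp [ppt, hi, j.2]
    have e2 : (∑ j ∈ Zᶜ, ppt A Z i j * (if j ∈ Z then y j else x j))
        = (∑ j ∈ Zᶜ, A i j * x j)
          - ∑ j ∈ Zᶜ, (∑ k : Z, ∑ l : Z, A i k * (subm A Z Z)⁻¹ k l * A l j) * x j := by
      rw [← Finset.sum_sub_distrib]
      refine Finset.sum_congr rfl fun j hj => ?_
      have hj' : j ∉ Z := Finset.mem_compl.mp hj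
      simp [ppt, hi, hj', sub_mul]
    have e3 : (∑ j : Z, (∑ l : Z, A i l * (subm A Z Z)⁻¹ l j) * y j)
        = ∑ l : Z, A i l * ∑ j : Z, (subm A Z Z)⁻¹ l j * y j := by
      calc (∑ j : Z, (∑ l : Z, A i l * (subm A Z Z)⁻¹ l j) * y j)
          = ∑ j : Z, ∑ l : Z, A i l * ((subm A Z Z)⁻¹ l j * y j) := by
            refine Finset.sum_congr rfl fun j _ => ?_
            rw [Finset.sum_mul]
            exact Finset.sum_congr rfl fun l _ => by ring
        _ = ∑ l : Z, ∑ j : Z, A i l * ((subm A Z Z)⁻¹ l j * y j) := Finset.sum_comm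
        _ = ∑ l : Z, A i l * ∑ j : Z, (subm A Z Z)⁻¹ l j * y j := by
            exact Finset.sum_congr rfl fun l _ => (Finset.mul_sum _ _ _).symm
    have e4 : (∑ j ∈ Zᶜ, (∑ k : Z, ∑ l : Z, A i k * (subm A Z Z)⁻¹ k l * A l j) * x j)
        = ∑ k : Z, A i k * ∑ j ∈ Zᶜ, (∑ l : Z, (subm A Z Z)⁻¹ k l * A l j) * x j := by
      calc (∑ j ∈ Zᶜ, (∑ k : Z, ∑ l : Z, A i k * (subm A Z Z)⁻¹ k l * A l j) * x j)
          = ∑ j ∈ Zᶜ, ∑ k : Z, A i k * ((∑ l : Z, (subm A Z Z)⁻¹ k l * A l j) * x j) := by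
            refine Finset.sum_congr rfl fun j _ => ?_
            rw [Finset.sum_mul]
            refine Finset.sum_congr rfl fun k _ => ?_
            conv_rhs => rw [Finset.sum_mul, Finset.mul_sum]
            rw [Finset.sum_mul]
            exact Finset.sum_congr rfl fun l _ => by ring
        _ = ∑ k : Z, ∑ j ∈ Zᶜ, A i k * ((∑ l : Z, (subm A Z Z)⁻¹ k l * A l j) * x j) :=
            Finset.sum_comm
        _ = ∑ k : Z, A i k * ∑ j ∈ Zᶜ, (∑ l : Z, (subm A Z Z)⁻¹ k l * A l j) * x j := by
            exact Finset.sum_congr rfl fun k _ => (Finset.mul_sum _ _ _).symm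
    rw [e1, e2, e3, e4, if_neg hi]
    have hyi : y i = (∑ j ∈ Z, A i j * x j) + ∑ j ∈ Zᶜ, A i j * x j := by
      rw [← hy]
      show (∑ m, A i m * x m) = _
      rw [← Finset.sum_add_sum_compl Z]
    rw [hyi]
    have e5 : (∑ k : Z, A i k * ∑ j : Z, (subm A Z Z)⁻¹ k j * y j)
        - (∑ k : Z, A i k * ∑ j ∈ Zᶜ, (∑ l : Z, (subm A Z Z)⁻¹ k l * A l j) * x j)
        = ∑ j ∈ Z, A i j * x j := by
      rw [← Finset.sum_sub_distrib, ← Finset.sum_attach Z (fun j => A i j * x j)]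
      refine Finset.sum_congr rfl fun k _ => ?_
      rw [← mul_sub, key_s8 A Z hZ x y hy k]
    linear_combination e5
end

section
/- Let A be a V×V-matrix over a field and Z ⊆ V with A[Z,Z] nonsingular. Define the nullity polynomial p(A) = Σ_{X,Y ⊆ V} y^{n(A[X,Y])}, summing over all pairs of subsets of V, where n denotes nullity. Then p(A) = p(A*Z). -/
open Matrix
open scoped symmDiff

variable {V F : Type*} [Fintype V] [DecidableEq V] [Field F]

/-- The nullity polynomial p(A) = Σ_{X,Y ⊆ V} y^{n(A[X,Y])}. -/
noncomputable def nullityPoly (A : Matrix V V F) : Polynomial ℤ :=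
  ∑ X : Finset V, ∑ Y : Finset V, Polynomial.X ^ (nullity (subm A X Y))

/-! ### Auxiliary development -/

/-- Solution space: vectors supported on `Y` whose image under `A` vanishes on `X`. -/
def Ksol (A : Matrix V V F) (X Y : Finset V) : Submodule F (V → F) where
  carrier := {u | (∀ i ∉ Y, u i = 0) ∧ ∀ i ∈ X, A.mulVec u i = 0}
  add_mem' := by
    rintro a b ⟨ha1, ha2⟩ ⟨hb1, hb2⟩
    refine ⟨fun i hi => ?_, fun i hi => ?_⟩
    · simp [ha1 i hi, hb1 i hi]
    · simp [Matrix.mulVec_add, ha2 i hi, hb2 i hi]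
  zero_mem' := by
    refine ⟨fun i _ => rfl, fun i _ => ?_⟩
    simp [Matrix.mulVec_zero]
  smul_mem' := by
    rintro c a ⟨ha1, ha2⟩
    refine ⟨fun i hi => ?_, fun i hi => ?_⟩
    · simp [ha1 i hi]
    · simp [Matrix.mulVec_smul, ha2 i hi]

lemma mem_Ksol {A : Matrix V V F} {X Y : Finset V} {u : V → F} :
    u ∈ Ksol A X Y ↔ (∀ i ∉ Y, u i = 0) ∧ ∀ i ∈ X, A.mulVec u i = 0 := Iff.rfl

lemma sum_subtype_eq_mulVec (A : Matrix V V F) (Y : Finset V) (u : V → F)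
    (hu : ∀ i ∉ Y, u i = 0) (i : V) :
    ∑ j : ↥Y, A i ↑j * u ↑j = A.mulVec u i := by
  rw [Matrix.mulVec, dotProduct, Finset.sum_coe_sort Y (fun j => A i j * u j)]
  exact Finset.sum_subset (Finset.subset_univ Y)
    (by intro j _ hj; simp [hu j hj])

/-- Extension by zero as a linear map. -/
noncomputable def extY (F : Type*) [Field F] (Y : Finset V) : (↥Y → F) →ₗ[F] (V → F) where
  toFun w := fun i => if h : i ∈ Y then w ⟨i, h⟩ else 0
  map_add' := by intros w w'; funext i; by_cases h : i ∈ Y <;> simp [h]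
  map_smul' := by intros c w; funext i; by_cases h : i ∈ Y <;> simp [h]

lemma extY_injective (Y : Finset V) : Function.Injective (extY F Y) := by
  intro w w' h
  funext j
  have := congrFun h ↑j
  simpa [extY, j.2] using this

lemma ker_map_extY (A : Matrix V V F) (X Y : Finset V) :
    (LinearMap.ker (subm A X Y).mulVecLin).map (extY F Y) = Ksol A X Y := by
  ext u
  simp only [Submodule.mem_map, LinearMap.mem_ker, mem_Ksol]
  constructor
  · rintro ⟨w, hw, rfl⟩
    have hz : ∀ i ∉ Y, extY F Y w i = 0 := fun i hi => dif_neg hi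
    refine ⟨hz, fun i hi => ?_⟩
    rw [← sum_subtype_eq_mulVec A Y _ hz i]
    have h2 : (subm A X Y).mulVec w ⟨i, hi⟩ = 0 := by
      rw [show (subm A X Y).mulVec w = (subm A X Y).mulVecLin w from rfl, hw]; rfl
    rw [Matrix.mulVec, dotProduct] at h2
    rw [← h2]
    apply Finset.sum_congr rfl
    intro j _
    simp [subm, extY, j.2]
  · rintro ⟨hz, hX⟩
    refine ⟨fun j => u ↑j, ?_, ?_⟩
    · ext ⟨i, hi⟩
      have := hX i hi
      rw [← sum_subtype_eq_mulVec A Y u hz i] at this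
      simpa [Matrix.mulVecLin_apply, Matrix.mulVec, dotProduct, subm] using this
    · funext i
      by_cases h : i ∈ Y
      · simp [extY, h]
      · simp [extY, h, hz i h]

lemma nullity_subm (A : Matrix V V F) (X Y : Finset V) :
    nullity (subm A X Y) = Module.finrank F (Ksol A X Y) := by
  rw [nullity, ← ker_map_extY A X Y]
  exact LinearEquiv.finrank_eq
    (Submodule.equivMapOfInjective (extY F Y) (extY_injective Y) _)

/-! ### The pivot matrices -/

/-- Matrix acting as `ppt A Z` on rows in `Z` and identity elsewhere. -/
noncomputable def Cm (A : Matrix V V F) (Z : Finset V) : Matrix V V F :=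
  fun i j => if i ∈ Z then ppt A Z i j else (1 : Matrix V V F) i j

/-- Matrix acting as `A` on rows in `Z` and identity elsewhere. -/
noncomputable def Em (A : Matrix V V F) (Z : Finset V) : Matrix V V F :=
  fun i j => if i ∈ Z then A i j else (1 : Matrix V V F) i j

/-- Matrix acting as identity on rows in `Z` and as `ppt A Z` elsewhere. -/
noncomputable def Dm (A : Matrix V V F) (Z : Finset V) : Matrix V V F :=
  fun i j => if i ∈ Z then (1 : Matrix V V F) i j else ppt A Z i j

lemma key_sum (A : Matrix V V F) (Z : Finset V) (hZ : IsUnit (subm A Z Z).det)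
    (i : ↥Z) (f : ↥Z → F) :
    ∑ k : ↥Z, subm A Z Z i k * ∑ l : ↥Z, (subm A Z Z)⁻¹ k l * f l = f i := by
  have hMN : subm A Z Z * (subm A Z Z)⁻¹ = 1 := Matrix.mul_nonsing_inv _ hZ
  calc ∑ k : ↥Z, subm A Z Z i k * ∑ l : ↥Z, (subm A Z Z)⁻¹ k l * f l
      = ∑ l : ↥Z, (∑ k : ↥Z, subm A Z Z i k * (subm A Z Z)⁻¹ k l) * f l := by
        simp_rw [Finset.mul_sum, Finset.sum_mul, mul_assoc]
        exact Finset.sum_comm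
    _ = ∑ l : ↥Z, (1 : Matrix ↥Z ↥Z F) i l * f l := by
        simp_rw [← Matrix.mul_apply, hMN]
    _ = f i := by simp [Matrix.one_apply]

lemma ACeq (A : Matrix V V F) (Z : Finset V) (hZ : IsUnit (subm A Z Z).det) :
    A * Cm A Z = Dm A Z := by
  have hMN : subm A Z Z * (subm A Z Z)⁻¹ = 1 := Matrix.mul_nonsing_inv _ hZ
  ext i j
  rw [Matrix.mul_apply, ← Finset.sum_add_sum_compl Z]
  have hcompl : ∑ k ∈ Zᶜ, A i k * Cm A Z k j
      = if j ∈ Zᶜ then A i j else 0 := by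
    rw [← Finset.sum_ite_eq' Zᶜ j (fun k => A i k)]
    apply Finset.sum_congr rfl
    intro k hk
    have hk' : k ∉ Z := Finset.mem_compl.mp hk
    simp [Cm, hk', Matrix.one_apply, mul_ite]
  have hZ' : ∑ k ∈ Z, A i k * Cm A Z k j
      = ∑ k : ↥Z, A i ↑k * ppt A Z ↑k j := by
    rw [Finset.sum_coe_sort Z (fun k => A i k * ppt A Z k j)]
    apply Finset.sum_congr rfl
    intro k hk
    simp [Cm, hk]
  rw [hcompl, hZ']
  by_cases hi : i ∈ Z <;> by_cases hj : j ∈ Z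
  · -- i ∈ Z, j ∈ Z : result is 1 i j
    have : ∑ k : ↥Z, A i ↑k * ppt A Z ↑k j
        = (subm A Z Z * (subm A Z Z)⁻¹) ⟨i, hi⟩ ⟨j, hj⟩ := by
      rw [Matrix.mul_apply]
      apply Finset.sum_congr rfl
      intro k _
      simp [ppt, k.2, hj, subm, Matrix.submatrix_apply]
    rw [this, hMN]
    simp [Dm, hi, Matrix.one_apply, Finset.mem_compl, hj, Subtype.ext_iff]
  · -- i ∈ Z, j ∉ Z : result is 0
    have : ∑ k : ↥Z, A i ↑k * ppt A Z ↑k j = - A i j := by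
      have := key_sum A Z hZ ⟨i, hi⟩ (fun l => A ↑l j)
      calc ∑ k : ↥Z, A i ↑k * ppt A Z ↑k j
          = - ∑ k : ↥Z, subm A Z Z ⟨i, hi⟩ k * ∑ l : ↥Z, (subm A Z Z)⁻¹ k l * A ↑l j := by
            rw [← Finset.sum_neg_distrib]
            apply Finset.sum_congr rfl
            intro k _
            simp [ppt, k.2, hj, subm, Matrix.submatrix_apply, mul_neg]
        _ = - A i j := by rw [this]
    rw [this]
    have hij : i ≠ j := by rintro rfl; exact hj hi
    simp [this, Dm, hi, hj, Matrix.one_apply, hij, Finset.mem_compl]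
  · -- i ∉ Z, j ∈ Z
    have : ∑ k : ↥Z, A i ↑k * ppt A Z ↑k j = ppt A Z i j := by
      rw [show ppt A Z i j = ∑ k : ↥Z, A i ↑k * (subm A Z Z)⁻¹ k ⟨j, hj⟩ by
        simp [ppt, hi, hj]]
      apply Finset.sum_congr rfl
      intro k _
      simp [ppt, k.2, hj]
    rw [this]
    simp [Dm, hi, Finset.mem_compl, hj]
  · -- i ∉ Z, j ∉ Z
    have : ∑ k : ↥Z, A i ↑k * ppt A Z ↑k j
        = - ∑ k : ↥Z, ∑ l : ↥Z, A i ↑k * (subm A Z Z)⁻¹ k l * A ↑l j := by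
      rw [← Finset.sum_neg_distrib]
      apply Finset.sum_congr rfl
      intro k _
      simp [ppt, k.2, hj, Finset.mul_sum, mul_assoc]
    rw [this]
    simp only [Dm, if_neg hi]
    simp [ppt, hi, hj, Finset.mem_compl]
    ring

lemma ECeq (A : Matrix V V F) (Z : Finset V) (hZ : IsUnit (subm A Z Z).det) :
    Em A Z * Cm A Z = 1 := by
  ext i j
  by_cases hi : i ∈ Z
  · rw [Matrix.mul_apply]
    have h1 : ∑ k, Em A Z i k * Cm A Z k j = ∑ k, A i k * Cm A Z k j :=
      Finset.sum_congr rfl (fun k _ => by simp [Em, hi])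
    rw [h1, ← Matrix.mul_apply, ACeq A Z hZ]
    simp [Dm, hi]
  · rw [Matrix.mul_apply]
    have h1 : ∑ k, Em A Z i k * Cm A Z k j = Cm A Z i j := by
      simp [Em, hi, Matrix.one_apply, ite_mul]
    rw [h1]
    simp [Cm, hi]

lemma Cm_mulVec (A : Matrix V V F) (Z : Finset V) (u : V → F) (i : V) :
    (Cm A Z).mulVec u i = if i ∈ Z then (ppt A Z).mulVec u i else u i := by
  by_cases hi : i ∈ Z
  · rw [if_pos hi, Matrix.mulVec, dotProduct, Matrix.mulVec, dotProduct]
    exact Finset.sum_congr rfl (fun k _ => by simp [Cm, hi])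
  · rw [if_neg hi, Matrix.mulVec, dotProduct]
    simp [Cm, hi, Matrix.one_apply, ite_mul]

lemma Em_mulVec (A : Matrix V V F) (Z : Finset V) (u : V → F) (i : V) :
    (Em A Z).mulVec u i = if i ∈ Z then A.mulVec u i else u i := by
  by_cases hi : i ∈ Z
  · rw [if_pos hi, Matrix.mulVec, dotProduct, Matrix.mulVec, dotProduct]
    exact Finset.sum_congr rfl (fun k _ => by simp [Em, hi])
  · rw [if_neg hi, Matrix.mulVec, dotProduct]
    simp [Em, hi, Matrix.one_apply, ite_mul]

lemma Dm_mulVec (A : Matrix V V F) (Z : Finset V) (u : V → F) (i : V) :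
    (Dm A Z).mulVec u i = if i ∈ Z then u i else (ppt A Z).mulVec u i := by
  by_cases hi : i ∈ Z
  · rw [if_pos hi, Matrix.mulVec, dotProduct]
    simp [Dm, hi, Matrix.one_apply, ite_mul]
  · rw [if_neg hi, Matrix.mulVec, dotProduct, Matrix.mulVec, dotProduct]
    exact Finset.sum_congr rfl (fun k _ => by simp [Dm, hi])

lemma Cm_injective (A : Matrix V V F) (Z : Finset V) (hZ : IsUnit (subm A Z Z).det) :
    Function.Injective (Cm A Z).mulVecLin := by
  intro x y h
  have h' : (Cm A Z).mulVec x = (Cm A Z).mulVec y := h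
  have := congrArg ((Em A Z).mulVec) h'
  rwa [Matrix.mulVec_mulVec, Matrix.mulVec_mulVec, ECeq A Z hZ, Matrix.one_mulVec,
    Matrix.one_mulVec] at this

lemma Ksol_map (A : Matrix V V F) (Z : Finset V) (hZ : IsUnit (subm A Z Z).det)
    (X Y : Finset V) :
    (Ksol (ppt A Z) X Y).map (Cm A Z).mulVecLin
      = Ksol A (X \ Z ∪ Z \ Y) (Y \ Z ∪ Z \ X) := by
  have hCE : Cm A Z * Em A Z = 1 := mul_eq_one_comm.mp (ECeq A Z hZ)
  ext u
  simp only [Submodule.mem_map, mem_Ksol, Matrix.mulVecLin_apply]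
  constructor
  · rintro ⟨u', ⟨hY, hX⟩, rfl⟩
    have hmv : ∀ i, A.mulVec ((Cm A Z).mulVec u') i = (Dm A Z).mulVec u' i := by
      intro i; rw [Matrix.mulVec_mulVec, ACeq A Z hZ]
    constructor
    · intro i hi
      rw [Cm_mulVec]
      by_cases h : i ∈ Z
      · rw [if_pos h]
        apply hX
        by_contra hx
        exact hi (Finset.mem_union_right _ (Finset.mem_sdiff.mpr ⟨h, hx⟩))
      · rw [if_neg h]
        apply hY
        intro hy
        exact hi (Finset.mem_union_left _ (Finset.mem_sdiff.mpr ⟨hy, h⟩))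
    · intro i hi
      rw [hmv, Dm_mulVec]
      rcases Finset.mem_union.mp hi with h | h
      · rcases Finset.mem_sdiff.mp h with ⟨hx, hz⟩
        rw [if_neg hz]; exact hX i hx
      · rcases Finset.mem_sdiff.mp h with ⟨hz, hy⟩
        rw [if_pos hz]; exact hY i hy
  · rintro ⟨hY0, hX0⟩
    have hcu : (Cm A Z).mulVec ((Em A Z).mulVec u) = u := by
      rw [Matrix.mulVec_mulVec, hCE, Matrix.one_mulVec]
    have hAu : ∀ i, A.mulVec u i = (Dm A Z).mulVec ((Em A Z).mulVec u) i := by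
      intro i
      conv_lhs => rw [← hcu]
      rw [Matrix.mulVec_mulVec, ACeq A Z hZ]
    refine ⟨(Em A Z).mulVec u, ⟨?_, ?_⟩, hcu⟩
    · intro i hi
      rw [Em_mulVec]
      by_cases h : i ∈ Z
      · rw [if_pos h]
        exact hX0 i (Finset.mem_union_right _ (Finset.mem_sdiff.mpr ⟨h, hi⟩))
      · rw [if_neg h]
        apply hY0
        intro hmem
        rcases Finset.mem_union.mp hmem with hm | hm
        · exact hi (Finset.mem_sdiff.mp hm).1
        · exact h (Finset.mem_sdiff.mp hm).1
    · intro i hi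
      by_cases h : i ∈ Z
      · have h1 : u i = (ppt A Z).mulVec ((Em A Z).mulVec u) i := by
          conv_lhs => rw [← hcu]
          rw [Cm_mulVec, if_pos h]
        rw [← h1]
        apply hY0
        intro hmem
        rcases Finset.mem_union.mp hmem with hm | hm
        · exact absurd h (Finset.mem_sdiff.mp hm).2
        · exact (Finset.mem_sdiff.mp hm).2 hi
      · have h1 : (ppt A Z).mulVec ((Em A Z).mulVec u) i = A.mulVec u i := by
          rw [hAu, Dm_mulVec, if_neg h]
        rw [h1]
        exact hX0 i (Finset.mem_union_left _ (Finset.mem_sdiff.mpr ⟨hi, h⟩))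

lemma nullity_ppt (A : Matrix V V F) (Z : Finset V) (hZ : IsUnit (subm A Z Z).det)
    (X Y : Finset V) :
    nullity (subm (ppt A Z) X Y)
      = nullity (subm A (X \ Z ∪ Z \ Y) (Y \ Z ∪ Z \ X)) := by
  rw [nullity_subm, nullity_subm, ← Ksol_map A Z hZ X Y]
  exact LinearEquiv.finrank_eq
    (Submodule.equivMapOfInjective _ (Cm_injective A Z hZ) _)

/-- The nullity polynomial is invariant under principal pivot transform. -/
theorem nullityPoly_ppt_invariant (A : Matrix V V F) (Z : Finset V)
    (hZ : IsUnit (subm A Z Z).det) :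
    nullityPoly A = nullityPoly (ppt A Z) := by
  have hrw : ∀ B : Matrix V V F, nullityPoly B
      = ∑ p : Finset V × Finset V,
          (Polynomial.X : Polynomial ℤ) ^ nullity (subm B p.1 p.2) := by
    intro B
    rw [nullityPoly, Fintype.sum_prod_type]
  rw [hrw, hrw]
  have hinv : Function.Involutive
      (fun p : Finset V × Finset V => (p.1 \ Z ∪ Z \ p.2, p.2 \ Z ∪ Z \ p.1)) := by
    rintro ⟨X, Y⟩
    simp only [Prod.mk.injEq]
    constructor <;>
    · ext a
      by_cases h : a ∈ Z <;>
        simp only [Finset.mem_union, Finset.mem_sdiff, h] <;> tauto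
  exact (Fintype.sum_bijective _ hinv.bijective _ _
    (fun p => by rw [nullity_ppt A Z hZ p.1 p.2])).symm
end

section
/- Let A be a nonsingular V×V-matrix over a field. Then for each natural number i, the number of pairs (X,Y) of subsets of V such that n(A[X,Y]) = i equals the number of pairs (X,Y) of subsets of V such that n(A⁻¹[X,Y]) = i. Equivalently, the nullity polynomial p(A) = Σ_{X,Y ⊆ V} y^{n(A[X,Y])} satisfies p(A) = p(A⁻¹). -/
open Matrix
open scoped symmDiff

variable {V F : Type*} [Fintype V] [DecidableEq V] [Field F]

/-- Extension by zero of a vector indexed by a finset to a vector indexed by V. -/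
noncomputable def extZ (Y : Finset V) : (Y → F) →ₗ[F] (V → F) where
  toFun v := fun j => if h : j ∈ Y then v ⟨j, h⟩ else 0
  map_add' v w := by funext j; by_cases h : j ∈ Y <;> simp [h]
  map_smul' c v := by funext j; by_cases h : j ∈ Y <;> simp [h]

lemma mulVec_extZ (A : Matrix V V F) (Y : Finset V) (v : Y → F) (x : V) :
    A.mulVec (extZ Y v) x = ∑ y : Y, A x y * v y := by
  have h1 : A.mulVec (extZ Y v) x = ∑ j : V, A x j * extZ Y v j := rfl
  rw [h1, ← Finset.sum_subset (Finset.subset_univ Y)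
      (by intro j _ hj; simp [extZ, hj])]
  rw [← Finset.sum_attach Y fun j => A x j * extZ Y v j]
  apply Finset.sum_congr rfl
  intro y _
  simp [extZ, y.prop]

lemma subm_mulVec_s13 (A : Matrix V V F) (X Y : Finset V) (v : Y → F) (x : X) :
    (subm A X Y).mulVecLin v x = A.mulVec (extZ Y v) x := by
  rw [mulVec_extZ]
  rfl

lemma ker_map (A B : Matrix V V F) (hBA : B * A = 1) (X Y X' Y' : Finset V)
    (hX' : ∀ j, j ∈ X' ↔ j ∉ X) (hY' : ∀ j, j ∈ Y' ↔ j ∉ Y) (v : Y → F)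
    (hv : (subm A X Y).mulVecLin v = 0) :
    (subm B Y' X').mulVecLin (fun x : ↥X' => A.mulVec (extZ Y v) x) = 0 ∧
    (fun y : ↥Y => B.mulVec (extZ X'
        (fun x : ↥X' => A.mulVec (extZ Y v) x)) y) = v := by
  set w := A.mulVec (extZ Y v) with hw
  have hw0 : ∀ x ∈ X, w x = 0 := by
    intro x hx
    have := congrFun hv ⟨x, hx⟩
    rw [subm_mulVec_s13] at this
    simpa using this
  have hwext : extZ X' (fun x : ↥X' => w x) = w := by
    funext j
    by_cases hj : j ∈ X'
    · simp only [extZ, LinearMap.coe_mk, AddHom.coe_mk, hj, dif_pos]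
    · have hjX : j ∈ X := by by_contra h; exact hj ((hX' j).mpr h)
      simp [extZ, hj, hw0 j hjX]
  have hAw : B.mulVec w = extZ Y v := by
    rw [hw, mulVec_mulVec, hBA, one_mulVec]
  constructor
  · funext j
    rw [subm_mulVec_s13, hwext, hAw]
    have hj : (j : V) ∉ Y := (hY' j).mp j.prop
    simp [extZ, hj]
  · funext y
    rw [hwext, hAw]
    simp [extZ, y.prop]

/-- The transfer map between kernels of complementary submatrices. -/
noncomputable def trf (A : Matrix V V F) (Y X' : Finset V) :
    (↥Y → F) →ₗ[F] (↥X' → F) :=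
  (LinearMap.funLeft F F (Subtype.val : ↥X' → V)).comp (A.mulVecLin.comp (extZ Y))

/-- The nullity theorem (Gustafson, Fiedler–Markham):
n(A[X,Y]) = n(A⁻¹[Yᶜ,Xᶜ]) for invertible A. -/
lemma nullity_subm_inv (A B : Matrix V V F) (hBA : B * A = 1) (hAB : A * B = 1)
    (X Y : Finset V) : nullity (subm A X Y) = nullity (subm B Yᶜ Xᶜ) := by
  have hX' : ∀ j, j ∈ (Xᶜ : Finset V) ↔ j ∉ X := fun j => Finset.mem_compl
  have hY' : ∀ j, j ∈ (Yᶜ : Finset V) ↔ j ∉ Y := fun j => Finset.mem_compl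
  have hX'' : ∀ j, j ∈ X ↔ j ∉ (Xᶜ : Finset V) := by simp [Finset.mem_compl]
  have hY'' : ∀ j, j ∈ Y ↔ j ∉ (Yᶜ : Finset V) := by simp [Finset.mem_compl]
  have hφ : ∀ v ∈ LinearMap.ker (subm A X Y).mulVecLin,
      trf A Y Xᶜ v ∈ LinearMap.ker (subm B Yᶜ Xᶜ).mulVecLin := by
    intro v hv
    exact (ker_map A B hBA X Y Xᶜ Yᶜ hX' hY' v hv).1
  have hψ : ∀ v ∈ LinearMap.ker (subm B Yᶜ Xᶜ).mulVecLin,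
      trf B Xᶜ Y v ∈ LinearMap.ker (subm A X Y).mulVecLin := by
    intro v hv
    exact (ker_map B A hAB Yᶜ Xᶜ Y X hY'' hX'' v hv).1
  have e : LinearMap.ker (subm A X Y).mulVecLin ≃ₗ[F]
      LinearMap.ker (subm B Yᶜ Xᶜ).mulVecLin := by
    refine LinearEquiv.ofLinear ((trf A Y Xᶜ).restrict hφ) ((trf B Xᶜ Y).restrict hψ) ?_ ?_
    · ext v
      exact congrFun ((ker_map B A hAB Yᶜ Xᶜ Y X hY'' hX'' v.1 v.2).2) _
    · ext v
      exact congrFun ((ker_map A B hBA X Y Xᶜ Yᶜ hX' hY' v.1 v.2).2) _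
  exact e.finrank_eq

/-- The complementation permutation of `Finset V`. -/
def complPerm : Finset V ≃ Finset V :=
  Function.Involutive.toPerm compl (fun s => compl_compl s)

/-- For a nonsingular matrix A, the number of submatrices of each nullity,
and hence the nullity polynomial, is invariant under inversion. -/
theorem nullity_count_inv_invariant (A : Matrix V V F) (hA : IsUnit A.det) :
    (∀ i : ℕ,
      ((Finset.univ : Finset (Finset V × Finset V)).filter
          (fun p => nullity (subm A p.1 p.2) = i)).card =
      ((Finset.univ : Finset (Finset V × Finset V)).filter
          (fun p => nullity (subm A⁻¹ p.1 p.2) = i)).card) ∧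
    nullityPoly A = nullityPoly A⁻¹ := by
  have hBA : A⁻¹ * A = 1 := Matrix.nonsing_inv_mul A hA
  have hAB : A * A⁻¹ = 1 := Matrix.mul_nonsing_inv A hA
  have key : ∀ X Y : Finset V,
      nullity (subm A X Y) = nullity (subm A⁻¹ Yᶜ Xᶜ) :=
    fun X Y => nullity_subm_inv A A⁻¹ hBA hAB X Y
  constructor
  · intro i
    refine Finset.card_bij' (fun p _ => (p.2ᶜ, p.1ᶜ)) (fun q _ => (q.2ᶜ, q.1ᶜ))
      ?_ ?_ ?_ ?_
    · intro p hp
      simp only [Finset.mem_filter, Finset.mem_univ, true_and] at hp ⊢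
      rw [← hp, key]
    · intro q hq
      simp only [Finset.mem_filter, Finset.mem_univ, true_and] at hq ⊢
      rw [key, compl_compl, compl_compl, hq]
    · intro p _; simp
    · intro q _; simp
  · calc nullityPoly A
        = ∑ X : Finset V, ∑ Y : Finset V,
            (Polynomial.X : Polynomial ℤ) ^ (nullity (subm A⁻¹ Yᶜ Xᶜ)) := by
          unfold nullityPoly
          exact Finset.sum_congr rfl fun X _ =>
            Finset.sum_congr rfl fun Y _ => by rw [key]
      _ = ∑ X : Finset V, ∑ Y : Finset V,
            (Polynomial.X : Polynomial ℤ) ^ (nullity (subm A⁻¹ Y Xᶜ)) := by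
          refine Finset.sum_congr rfl fun X _ => ?_
          exact Fintype.sum_equiv (complPerm (V := V)) _ _ fun Y => rfl
      _ = ∑ X : Finset V, ∑ Y : Finset V,
            (Polynomial.X : Polynomial ℤ) ^ (nullity (subm A⁻¹ Y X)) := by
          exact Fintype.sum_equiv (complPerm (V := V)) _ _ fun X => rfl
      _ = nullityPoly A⁻¹ := by
          unfold nullityPoly
          exact Finset.sum_comm
end

section
/- Let G be a simple graph with vertex set V, v ∈ V, and G^v its local complement at v. Over the field GF(2), the adjacency matrix of G^v satisfies A(G^v) = ((A(G)+I_{v})*{v}) + I_{N_G(v)∪{v}}, where I_S denotes the diagonal 0-1 matrix with ones exactly at indices in S, and * is the principal pivot transform. -/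
open Matrix
open scoped symmDiff

variable {V F : Type*} [Fintype V] [DecidableEq V] [Field F]

/-- Local complement of a simple graph G at a vertex v: complement the subgraph
induced on the neighborhood of v. -/
def localComp {V : Type*} (G : SimpleGraph V) (v : V) : SimpleGraph V where
  Adj a b := a ≠ b ∧ Xor (G.Adj a b) (G.Adj v a ∧ G.Adj v b)
  symm := by
    constructor
    rintro a b ⟨hne, h⟩
    refine ⟨hne.symm, ?_⟩
    rwa [G.adj_comm b a, and_comm]
  loopless := by constructor; rintro a ⟨h, -⟩; exact h rfl

instance {V : Type*} [DecidableEq V] (G : SimpleGraph V) [DecidableRel G.Adj] (v : V) :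
    DecidableRel (localComp G v).Adj :=
  fun a b => decidable_of_iff (a ≠ b ∧ Xor (G.Adj a b) (G.Adj v a ∧ G.Adj v b)) Iff.rfl

/-! Pivoting on a single vertex `v` whose diagonal entry is `1` is a rank-one update: away from
row and column `v`, `M * {v} = M - M[·,v] M[v,·]`, while row and column `v` are kept up to sign.
Over GF(2), with `a` the row of `v` in `A(G)`, local complementation reads
`A(G^v) = A(G) + a aᵀ + diag a`, the diagonal term cancelling `aᵢ² = aᵢ`. Since `a v = 0`, the
pivot's row and column agree with those of `A(G)`, and `I_{N(v) ∪ {v}} = diag a + I_{v}` clears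
the pivot entry and the diagonal. -/

theorem inv_subm_singleton_apply {V F : Type*} [DecidableEq V] [Field F] (A : Matrix V V F)
    (v : V) (k l : ({v} : Finset V)) : (subm A {v} {v})⁻¹ k l = (A v v)⁻¹ := by
  obtain rfl := Subsingleton.elim k l
  obtain ⟨k, hk⟩ := k
  rw [Finset.mem_singleton] at hk
  subst hk
  simp [subm, Ring.inverse_eq_inv']

theorem ppt_singleton_apply {V F : Type*} [DecidableEq V] [Field F] (A : Matrix V V F)
    (v i j : V) :
    ppt A {v} i j =
      if i = v then
        if j = v then (A v v)⁻¹ else -((A v v)⁻¹ * A v j)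
      else
        if j = v then A i v * (A v v)⁻¹ else A i j - A i v * (A v v)⁻¹ * A v j := by
  unfold ppt
  by_cases hi : i = v <;> by_cases hj : j = v <;>
    simp [hi, hj, inv_subm_singleton_apply, mul_assoc]

theorem ppt_singleton_apply_of_charTwo {V F : Type*} [DecidableEq V] [Field F] [CharP F 2]
    (M : Matrix V V F) {v : V} (hv : M v v = 1) (i j : V) :
    ppt M {v} i j = if i = v ∨ j = v then M i j else M i j + M i v * M v j := by
  rw [ppt_singleton_apply, hv, inv_one]
  by_cases hi : i = v <;> by_cases hj : j = v <;>
    simp [hi, hj, hv, CharTwo.neg_eq, CharTwo.sub_eq_add]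

theorem localComp_adj {V : Type*} (G : SimpleGraph V) (v a b : V) :
    (localComp G v).Adj a b ↔ a ≠ b ∧ Xor (G.Adj a b) (G.Adj v a ∧ G.Adj v b) :=
  Iff.rfl

theorem adjMatrix_localComp_eq {V : Type*} [DecidableEq V] (G : SimpleGraph V)
    [DecidableRel G.Adj] (v : V) :
    (localComp G v).adjMatrix (ZMod 2) = G.adjMatrix (ZMod 2) +
      vecMulVec (G.adjMatrix (ZMod 2) v) (G.adjMatrix (ZMod 2) v) +
      diagonal (G.adjMatrix (ZMod 2) v) := by
  ext i j
  simp only [Matrix.add_apply, vecMulVec_apply, diagonal_apply, SimpleGraph.adjMatrix_apply,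
    localComp_adj]
  by_cases hij : i = j
  · subst hij
    by_cases h : G.Adj v i <;> simp [h, CharTwo.add_self_eq_zero]
  · by_cases h1 : G.Adj i j <;> by_cases h2 : G.Adj v i <;> by_cases h3 : G.Adj v j <;>
      simp [hij, h1, h2, h3, CharTwo.add_self_eq_zero]

/-- Over GF(2): A(G^v) = ((A(G) + I_{v}) * {v}) + I_{N_G(v) ∪ {v}}. -/
theorem adjMatrix_localComp {V : Type*} [Fintype V] [DecidableEq V]
    (G : SimpleGraph V) [DecidableRel G.Adj] (v : V) :
    SimpleGraph.adjMatrix (ZMod 2) (localComp G v) =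
      ppt (SimpleGraph.adjMatrix (ZMod 2) G +
            Matrix.diagonal (fun i => if i = v then (1 : ZMod 2) else 0)) {v} +
      Matrix.diagonal
        (fun i => if i ∈ G.neighborFinset v ∪ {v} then (1 : ZMod 2) else 0) := by
  ext i j
  rw [adjMatrix_localComp_eq, Matrix.add_apply (ppt _ _),
    ppt_singleton_apply_of_charTwo _ (by simp)]
  by_cases hi : i = v <;> by_cases hj : j = v
  · subst hi hj; simp [vecMulVec_apply, CharTwo.add_self_eq_zero]
  · subst hi; simp [hj, Ne.symm hj, vecMulVec_apply]
  · subst hj; simp [hi, vecMulVec_apply]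
  · simp [hi, hj, Ne.symm hj, vecMulVec_apply, diagonal_apply, G.adj_comm i v]
end

section
/- Let A be a V×V-matrix over a field and Z ⊆ V with A[Z,Z] nonsingular. If v₁, v₂ ∈ ker(A[X,Y]) are distinct vectors (for any X, Y ⊆ V, with R = Z ∖ (X △ Y)), then (A♯Z)[Y △ R, Y] v₁ ≠ (A♯Z)[Y △ R, Y] v₂; i.e., the linear map w ↦ (A♯Z)[Y △ R, Y] w is injective on ker(A[X,Y]). -/
open Matrix
open scoped symmDiff

variable {V F : Type*} [Fintype V] [DecidableEq V] [Field F]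

lemma sharp_mulVec_eq_zero (A : Matrix V V F) (Z : Finset V)
    (hZ : IsUnit (subm A Z Z).det) {x : V → F}
    (hx : (sharp A Z).mulVec x = 0) : x = 0 := by
  have hout : ∀ i, i ∉ Z → x i = 0 := by
    intro i hi
    have h := congrFun hx i
    simp only [Matrix.mulVec, dotProduct, sharp, if_neg hi, Pi.zero_apply, ite_mul, one_mul,
      zero_mul, Finset.sum_ite_eq, Finset.mem_univ, if_pos] at h
    exact h
  have hin : ∀ i : Z, (subm A Z Z).mulVec (fun j : Z => x j) i = 0 := by
    intro ⟨i, hi⟩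
    have h := congrFun hx i
    simp only [Matrix.mulVec, dotProduct, sharp, if_pos hi, Pi.zero_apply] at h
    have hsub : ∑ j : V, A i j * x j = ∑ j ∈ Z, A i j * x j := by
      rw [← Finset.sum_subset (Finset.subset_univ Z)]
      intro j _ hj
      rw [hout j hj, mul_zero]
    simp only [Matrix.mulVec, dotProduct, subm, submatrix_apply]
    rw [← Finset.sum_attach Z (fun j => A i j * x j)] at hsub
    rw [← h, hsub]
    rfl
  have hinj : Function.Injective (subm A Z Z).mulVec :=
    Matrix.mulVec_injective_iff_isUnit.2 ((Matrix.isUnit_iff_isUnit_det _).2 hZ)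
  have hz : (fun j : Z => x j) = 0 := by
    apply hinj
    rw [Matrix.mulVec_zero]
    funext i
    exact hin i
  funext i
  by_cases hi : i ∈ Z
  · exact congrFun hz ⟨i, hi⟩
  · exact hout i hi

/-- The map w ↦ (A♯Z)[Y △ R, Y] w is injective on ker(A[X,Y]), where R = Z ∖ (X △ Y). -/
theorem sharp_injOn_ker (A : Matrix V V F) (Z : Finset V)
    (hZ : IsUnit (subm A Z Z).det) (X Y : Finset V)
    (R : Finset V) (hR : R = Z \ (X ∆ Y)) :
    Set.InjOn (fun w => (subm (sharp A Z) (Y ∆ R) Y).mulVec w)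
      (LinearMap.ker (subm A X Y).mulVecLin : Set (Y → F)) := by
  intro v₁ h₁ v₂ h₂ hEq
  simp only [SetLike.mem_coe, LinearMap.mem_ker, Matrix.mulVecLin_apply] at h₁ h₂
  set w : Y → F := v₁ - v₂ with hw
  have hker : (subm A X Y).mulVec w = 0 := by
    rw [hw, Matrix.mulVec_sub, h₁, h₂, sub_self]
  have hIm : (subm (sharp A Z) (Y ∆ R) Y).mulVec w = 0 := by
    simp only at hEq
    rw [hw, Matrix.mulVec_sub, hEq, sub_self]
  set x : V → F := fun i => if h : i ∈ Y then w ⟨i, h⟩ else 0 with hxdef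
  have hxs : ∀ (M : Matrix V V F) (i : V),
      ∑ j : V, M i j * x j = ∑ j : Y, M i j * w j := by
    intro M i
    rw [show (∑ j : V, M i j * x j) = ∑ j ∈ Y, M i j * x j by
      rw [← Finset.sum_subset (Finset.subset_univ Y)]
      intro j _ hj
      simp [hxdef, dif_neg hj]]
    rw [← Finset.sum_attach Y (fun j => M i j * x j)]
    apply Finset.sum_congr rfl
    intro j _
    simp [hxdef, j.2]
  have hx0 : (sharp A Z).mulVec x = 0 := by
    funext i
    show ∑ j : V, sharp A Z i j * x j = 0
    by_cases hYR : i ∈ Y ∆ R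
    · have := congrFun hIm ⟨i, hYR⟩
      simp only [Matrix.mulVec, dotProduct, subm, submatrix_apply, Pi.zero_apply] at this
      rw [hxs]
      exact this
    · by_cases hiZ : i ∈ Z
      · -- show i ∈ X
        have hiX : i ∈ X := by
          by_cases hiR : i ∈ R
          · have hiY : i ∈ Y := by
              by_contra hiY
              exact hYR (Finset.mem_symmDiff.2 (Or.inr ⟨hiR, hiY⟩))
            have : i ∉ X ∆ Y := by
              rw [hR] at hiR; exact (Finset.mem_sdiff.1 hiR).2
            by_contra hiX
            exact this (Finset.mem_symmDiff.2 (Or.inr ⟨hiY, hiX⟩))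
          · have hiY : i ∉ Y := fun hiY =>
              hYR (Finset.mem_symmDiff.2 (Or.inl ⟨hiY, hiR⟩))
            have hXY : i ∈ X ∆ Y := by
              by_contra h
              exact hiR (hR ▸ Finset.mem_sdiff.2 ⟨hiZ, h⟩)
            rcases Finset.mem_symmDiff.1 hXY with ⟨h, _⟩ | ⟨h, _⟩
            · exact h
            · exact absurd h hiY
        have := congrFun hker ⟨i, hiX⟩
        simp only [Matrix.mulVec, dotProduct, subm, submatrix_apply, Pi.zero_apply] at this
        rw [hxs]
        simp only [sharp, if_pos hiZ]
        exact this
      · have hiR : i ∉ R := fun h => hiZ (Finset.mem_sdiff.1 (hR ▸ h)).1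
        have hiY : i ∉ Y := fun h =>
          hYR (Finset.mem_symmDiff.2 (Or.inl ⟨h, hiR⟩))
        have : ∑ j : V, sharp A Z i j * x j = x i := by
          simp only [sharp, if_neg hiZ, ite_mul, one_mul, zero_mul,
            Finset.sum_ite_eq, Finset.mem_univ, if_pos]
        rw [this, hxdef]
        exact dif_neg hiY
  have hx : x = 0 := sharp_mulVec_eq_zero A Z hZ hx0
  have hw0 : w = 0 := by
    funext j
    have := congrFun hx j
    simpa [hxdef, dif_pos j.2] using this
  have := sub_eq_zero.1 (hw ▸ hw0)
  exact this
end

section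
/- Let A be a V×V-matrix over a field and Z ⊆ V with A[Z,Z] nonsingular, and let S = A[V∖Z, V∖Z] − A[V∖Z, Z] A[Z,Z]⁻¹ A[Z, V∖Z] be the Schur complement of A[Z,Z] in A. Then for all X, Y ⊆ V∖Z, the nullity of S[X,Y] equals the nullity of A[X ∪ Z, Y ∪ Z], that is, n(S[X,Y]) = n(A[X ∪ Z, Y ∪ Z]). -/
open Matrix
open scoped symmDiff

variable {V F : Type*} [Fintype V] [DecidableEq V] [Field F]

section Aux
variable {F : Type*} [Field F]

lemma nullity_submatrix_equiv {m n m' n' : Type*} [Fintype m] [Fintype n] [Fintype m'] [Fintype n']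
    (M : Matrix m n F) (e : m' ≃ m) (f : n' ≃ n) :
    nullity (M.submatrix e f) = nullity M := by
  unfold nullity
  rw [Matrix.mulVecLin_submatrix]
  have h1 : LinearMap.ker (LinearMap.funLeft F F ⇑e) = ⊥ := (LinearEquiv.funCongrLeft F F e).ker
  rw [LinearMap.ker_comp_of_ker_eq_bot _ h1]
  rw [show LinearMap.funLeft F F f.symm = (LinearEquiv.funCongrLeft F F f.symm).toLinearMap from rfl,
    LinearMap.ker_comp, Submodule.comap_equiv_eq_map_symm, LinearEquiv.finrank_map_eq]

lemma nullity_unit_mul {m n : Type*} [Fintype m] [Fintype n] [DecidableEq m]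
    (P : Matrix m m F) (M : Matrix m n F) (hP : IsUnit P.det) :
    nullity (P * M) = nullity M := by
  unfold nullity
  rw [Matrix.mulVecLin_mul, LinearMap.ker_comp_of_ker_eq_bot]
  rw [Matrix.ker_mulVecLin_eq_bot_iff]
  intro v hv
  have := congrArg (P⁻¹.mulVec) hv
  rwa [mulVec_mulVec, nonsing_inv_mul _ hP, one_mulVec, mulVec_zero] at this

lemma nullity_mul_unit {m n : Type*} [Fintype m] [Fintype n] [DecidableEq n]
    (M : Matrix m n F) (Q : Matrix n n F) (hQ : IsUnit Q.det) :
    nullity (M * Q) = nullity M := by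
  unfold nullity
  rw [Matrix.mulVecLin_mul, LinearMap.ker_comp]
  let e : (n → F) ≃ₗ[F] (n → F) := LinearEquiv.ofLinear Q.mulVecLin Q⁻¹.mulVecLin
    (by rw [← Matrix.mulVecLin_mul, mul_nonsing_inv _ hQ, Matrix.mulVecLin_one])
    (by rw [← Matrix.mulVecLin_mul, nonsing_inv_mul _ hQ, Matrix.mulVecLin_one])
  rw [show Q.mulVecLin = e.toLinearMap from rfl, Submodule.comap_equiv_eq_map_symm,
    LinearEquiv.finrank_map_eq]

lemma nullity_fromBlocks_diag {p q r : Type*} [Fintype p] [Fintype q] [Fintype r] [DecidableEq r]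
    (S : Matrix p q F) (D : Matrix r r F) (hD : IsUnit D.det) :
    nullity (fromBlocks S 0 0 D) = nullity S := by
  have hDinj : ∀ y : r → F, D.mulVec y = 0 → y = 0 := by
    intro y hy
    have := congrArg (D⁻¹.mulVec) hy
    rwa [mulVec_mulVec, nonsing_inv_mul _ hD, one_mulVec, mulVec_zero] at this
  have key : ∀ w : q ⊕ r → F, (fromBlocks S 0 0 D).mulVec w =
      Sum.elim (S.mulVec (w ∘ Sum.inl)) (D.mulVec (w ∘ Sum.inr)) := by
    intro w
    have := Matrix.fromBlocks_mulVec S 0 0 D w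
    simpa using this
  have mem : ∀ w : q ⊕ r → F, w ∈ LinearMap.ker (fromBlocks S 0 0 D).mulVecLin ↔
      S.mulVec (w ∘ Sum.inl) = 0 ∧ w ∘ Sum.inr = 0 := by
    intro w
    rw [LinearMap.mem_ker, Matrix.mulVecLin_apply, key]
    constructor
    · intro h
      have h1 : S.mulVec (w ∘ Sum.inl) = 0 := funext fun i => congrFun h (Sum.inl i)
      have h2 : D.mulVec (w ∘ Sum.inr) = 0 := funext fun i => congrFun h (Sum.inr i)
      exact ⟨h1, hDinj _ h2⟩
    · rintro ⟨h1, h2⟩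
      funext i
      cases i with
      | inl i => exact congrFun h1 i
      | inr i => simp [h2, Matrix.mulVec_zero]
  apply LinearEquiv.finrank_eq
  exact
  { toFun := fun w => ⟨w.1 ∘ Sum.inl, ((mem w.1).1 w.2).1⟩
    map_add' := fun _ _ => rfl
    map_smul' := fun _ _ => rfl
    invFun := fun v => ⟨Sum.elim v.1 0, (mem _).2 (by
      constructor
      · have : (Sum.elim v.1 0 : q ⊕ r → F) ∘ Sum.inl = v.1 := rfl
        rw [this]; exact v.2
      · rfl)⟩
    left_inv := fun w => Subtype.ext (by
      funext i
      cases i with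
      | inl i => rfl
      | inr i => exact (congrFun ((mem w.1).1 w.2).2 i).symm
      )
    right_inv := fun v => Subtype.ext rfl }


end Aux

/-- For disjoint finsets, `X ⊕ Z ≃ X ∪ Z`. -/
def unionEquiv (X Z : Finset V) (h : ∀ x ∈ X, x ∉ Z) : X ⊕ Z ≃ {x // x ∈ X ∪ Z} where
  toFun := Sum.elim (fun x => ⟨x.1, Finset.mem_union_left _ x.2⟩)
    (fun z => ⟨z.1, Finset.mem_union_right _ z.2⟩)
  invFun u := if hx : u.1 ∈ X then Sum.inl ⟨u.1, hx⟩
    else Sum.inr ⟨u.1, (Finset.mem_union.1 u.2).resolve_left hx⟩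
  left_inv := by
    rintro (x | z)
    · simp
    · have : z.1 ∉ X := fun hx => h z.1 hx z.2
      simp [this]
  right_inv := by
    rintro ⟨u, hu⟩
    by_cases hx : u ∈ X <;> simp [hx]


/-- Nullity theorem for the Schur complement: for X, Y ⊆ V∖Z,
n(S[X,Y]) = n(A[X ∪ Z, Y ∪ Z]) where S is the Schur complement of A[Z,Z] in A. -/
theorem nullity_schur_complement (A : Matrix V V F) (Z : Finset V)
    (hZ : IsUnit (subm A Z Z).det) (X Y : Finset V)
    (hX : X ⊆ Zᶜ) (hY : Y ⊆ Zᶜ) :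
    nullity (((subm A Zᶜ Zᶜ) - (subm A Zᶜ Z) * (subm A Z Z)⁻¹ * (subm A Z Zᶜ)).submatrix
        (fun i : X => (⟨i.1, hX i.2⟩ : {x // x ∈ Zᶜ})) (fun j : Y => (⟨j.1, hY j.2⟩ : {x // x ∈ Zᶜ}))) =
    nullity (subm A (X ∪ Z) (Y ∪ Z)) := by
  have hdx : ∀ x ∈ X, x ∉ Z := fun x hx => Finset.mem_compl.1 (hX hx)
  have hdy : ∀ y ∈ Y, y ∉ Z := fun y hy => Finset.mem_compl.1 (hY hy)
  haveI : Invertible (subm A Z Z) := Matrix.invertibleOfIsUnitDet _ hZ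
  have hblock : (subm A (X ∪ Z) (Y ∪ Z)).submatrix (unionEquiv X Z hdx) (unionEquiv Y Z hdy) =
      fromBlocks (subm A X Y) (subm A X Z) (subm A Z Y) (subm A Z Z) := by
    ext i j
    rcases i with i | i <;> rcases j with j | j <;> rfl
  have hLHS : ((subm A Zᶜ Zᶜ) - (subm A Zᶜ Z) * (subm A Z Z)⁻¹ * (subm A Z Zᶜ)).submatrix
        (fun i : X => (⟨i.1, hX i.2⟩ : {x // x ∈ Zᶜ})) (fun j : Y => (⟨j.1, hY j.2⟩ : {x // x ∈ Zᶜ}))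
      = subm A X Y - subm A X Z * (subm A Z Z)⁻¹ * subm A Z Y := by
    ext i j
    rfl
  rw [hLHS, ← nullity_submatrix_equiv (subm A (X ∪ Z) (Y ∪ Z)) (unionEquiv X Z hdx)
    (unionEquiv Y Z hdy), hblock,
    Matrix.fromBlocks_eq_of_invertible₂₂ (subm A X Y) (subm A X Z) (subm A Z Y) (subm A Z Z)]
  rw [nullity_mul_unit _ _ (by rw [Matrix.det_fromBlocks_zero₁₂]; simp),
    nullity_unit_mul _ _ (by rw [Matrix.det_fromBlocks_zero₂₁]; simp),
    nullity_fromBlocks_diag _ _ hZ, invOf_eq_nonsing_inv]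
end
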